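/- arXiv:1806.08754 — 7 statements merged into one kernel-verified Lean document; each statement's English description precedes it below -/
import Mathlib

section
/- For all ℓ, m, n ≥ 1, the map (σ, τ) ↦ τ·(1_{ℓ+1}∘_{ℓ+1}σ) is a bijection from S_{m,n} × S_{ℓ,m+n} onto S_{ℓ,m,n}, where · denotes the product in the symmetric group S_{ℓ+m+n}. -/
open Equiv

/-- The equivalence between the lexicographically ordered sigma of `Fin (m i)` over `Fin n`
and `Fin (∑ i, m i)`, identifying the `i`-th block with the positions
`m 0 + ⋯ + m (i-1) + 1, …, m 0 + ⋯ + m i`. -/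
def sigmaFinSucc {n : ℕ} (β : Fin (n + 1) → Type*) :
    (Σ i : Fin (n + 1), β i) ≃ β 0 ⊕ (Σ i : Fin n, β i.succ) where
  toFun p :=
    Fin.cases (motive := fun i => β i → β 0 ⊕ (Σ i : Fin n, β i.succ))
      Sum.inl (fun i j => Sum.inr ⟨i, j⟩) p.1 p.2
  invFun x := Sum.elim (fun j => ⟨0, j⟩) (fun p => ⟨p.1.succ, p.2⟩) x
  left_inv := by
    rintro ⟨i, j⟩
    induction i using Fin.cases with
    | zero => simp
    | succ i => simp
  right_inv := by rintro (j | ⟨i, j⟩) <;> simp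

def finSigmaEquiv : ∀ (n : ℕ) (m : Fin n → ℕ), (Σ i, Fin (m i)) ≃ Fin (∑ i, m i)
  | 0, m =>
    haveI h1 : IsEmpty (Σ i : Fin 0, Fin (m i)) := ⟨fun p => p.1.elim0⟩
    haveI h2 : IsEmpty (Fin (∑ i, m i)) := by
      rw [show (∑ i, m i) = 0 by simp]
      infer_instance
    Equiv.equivOfIsEmpty _ _
  | n + 1, m =>
    ((sigmaFinSucc fun i => Fin (m i)).trans <|
      ((Equiv.refl (Fin (m 0))).sumCongr (finSigmaEquiv n fun i => m i.succ)).trans <|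
        finSumFinEquiv.trans (finCongr (Fin.sum_univ_succ m).symm))

/-- The operadic composition of permutations `σ(τ_1,…,τ_n) ∈ S_{m_1 + ⋯ + m_n}`:
the element in the `i`-th block at position `j` is sent to position `τ_i(j)` of the
block placed at slot `σ(i)`, the blocks being rearranged according to `σ` (so that the
new `k`-th block has size `m (σ⁻¹ k)`). -/
def permCompose {n : ℕ} {m : Fin n → ℕ} (σ : Equiv.Perm (Fin n))
    (τ : ∀ i, Equiv.Perm (Fin (m i))) : Equiv.Perm (Fin (∑ i, m i)) :=
  ((finSigmaEquiv n m).symm.trans <|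
    (Equiv.sigmaCongr σ fun i =>
      (τ i).trans (finCongr (congrArg m (σ.symm_apply_apply i).symm))).trans <|
    (finSigmaEquiv n fun k => m (σ.symm k)).trans (finCongr (Equiv.sum_comp σ.symm m)))

lemma circ_sum {n m : ℕ} (i : Fin n) :
    (∑ j : Fin n, if j = i then m else 1) = n + m - 1 := by
  classical
  rw [← Finset.add_sum_erase Finset.univ _ (Finset.mem_univ i), if_pos rfl]
  rw [Finset.sum_congr rfl (fun j hj => if_neg (Finset.ne_of_mem_erase hj)),
    Finset.sum_const, smul_eq_mul, mul_one,
    Finset.card_erase_of_mem (Finset.mem_univ i), Finset.card_univ, Fintype.card_fin]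
  have := i.isLt
  omega

/-- The `∘_i`-product of permutations: `β ∘_i α := β(1,…,1,α,1,…,1) ∈ S_{n+m-1}`
with `α` inserted in the `i`-th slot (`0`-indexed). -/
def circ {n m : ℕ} (β : Equiv.Perm (Fin n)) (i : Fin n) (α : Equiv.Perm (Fin m)) :
    Equiv.Perm (Fin (n + m - 1)) :=
  (finCongr (circ_sum i)).permCongr
    (permCompose (m := fun j => if j = i then m else 1) β
      (fun j => if h : j = i then (finCongr (if_pos h).symm).permCongr α else 1))

/-- `(m,n)`-shuffle condition for `σ ∈ S_N` with split point `m` (`0`-indexed):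
`σ 0 < σ 1 < ⋯ < σ (m-1)` and `σ m < σ (m+1) < ⋯`. -/
def IsShuffle {N : ℕ} (m : ℕ) (σ : Equiv.Perm (Fin N)) : Prop :=
  (∀ i j : Fin N, i < j → (j : ℕ) < m → σ i < σ j) ∧
  (∀ i j : Fin N, i < j → m ≤ (i : ℕ) → σ i < σ j)

/-- `(l,m,n)`-shuffle condition for `σ ∈ S_N` with split points `l` and `l + m`. -/
def IsShuffle3 {N : ℕ} (l m : ℕ) (σ : Equiv.Perm (Fin N)) : Prop :=
  (∀ i j : Fin N, i < j → (j : ℕ) < l → σ i < σ j) ∧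
  (∀ i j : Fin N, i < j → l ≤ (i : ℕ) → (j : ℕ) < l + m → σ i < σ j) ∧
  (∀ i j : Fin N, i < j → l + m ≤ (i : ℕ) → σ i < σ j)

/-!
An `(l,m,n)`-shuffle `ρ` is increasing on its first `l` positions. Sorting its values on the last
`m + n` positions gives an `(l, m+n)`-shuffle `τ` agreeing with `ρ` on the first `l` positions, so
`τ⁻¹ ρ` fixes them and is `1 ∘_{l+1} σ` for some `σ`. As `τ` is increasing on the last `m + n`
positions, `ρ = τ (1 ∘_{l+1} σ)` is increasing on a block of them exactly when `σ` is, so `ρ` is an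
`(l,m,n)`-shuffle iff `σ` is an `(m,n)`-shuffle. The pair is unique because the values of `τ` on
the last `m + n` positions are those of `ρ` in increasing order.
-/

open Finset

lemma coe_finSigmaEquiv_apply : ∀ (n : ℕ) (m : Fin n → ℕ) (p : Σ i, Fin (m i)),
    (finSigmaEquiv n m p : ℕ) = (∑ k ∈ Iio p.1, m k) + p.2
  | 0, _, p => p.1.elim0
  | n + 1, m, ⟨i, j⟩ => by
    induction i using Fin.cases with
    | zero => simp [finSigmaEquiv, sigmaFinSucc]
    | succ i =>
      simp only [finSigmaEquiv, sigmaFinSucc, Equiv.trans_apply, Equiv.coe_fn_mk,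
        Fin.cases_succ, Equiv.sumCongr_apply, Sum.map_inr, finSumFinEquiv_apply_right,
        finCongr_apply, Fin.val_cast, Fin.val_natAdd,
        coe_finSigmaEquiv_apply n (fun k => m k.succ) ⟨i, j⟩]
      simp only [← filter_gt_eq_Iio, sum_filter, Fin.sum_univ_succ, Fin.succ_lt_succ_iff,
        Fin.succ_pos, if_true]
      omega

lemma permCompose_one_finSigmaEquiv {n : ℕ} {m : Fin n → ℕ} (τ : ∀ i, Perm (Fin (m i)))
    (p : Σ i, Fin (m i)) :
    permCompose 1 τ (finSigmaEquiv n m p) = finSigmaEquiv n m ⟨p.1, τ p.1 p.2⟩ := by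
  simp only [permCompose, Equiv.trans_apply, Equiv.symm_apply_apply]
  rfl

lemma sum_Iio_ite_eq_one {n : ℕ} (m : ℕ) (i j : Fin n) :
    ∑ k ∈ Iio j, (if k = i then m else 1) = if (i : ℕ) < j then j + m - 1 else j := by
  split_ifs with hij
  · have hi : i ∈ Iio j := mem_Iio.2 (Fin.lt_def.2 hij)
    rw [← add_sum_erase _ _ hi, if_pos rfl,
      sum_congr rfl fun k hk => if_neg (ne_of_mem_erase hk), sum_const, smul_eq_mul, mul_one,
      card_erase_of_mem hi, Fin.card_Iio]
    omega
  · rw [sum_congr rfl fun k hk => if_neg fun hki => by rw [mem_Iio, hki, Fin.lt_def] at hk; omega,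
      sum_const, smul_eq_mul, mul_one, Fin.card_Iio]

lemma coe_circ_one_apply {n m : ℕ} (i : Fin n) (α : Perm (Fin m)) (x : Fin (n + m - 1)) :
    (circ 1 i α x : ℕ) =
      if h : (i : ℕ) ≤ x ∧ (x : ℕ) < i + m then (i : ℕ) + α ⟨x - i, by omega⟩ else x := by
  set b : Fin n → ℕ := fun k => if k = i then m else 1
  -- `x` is entry `r` of block `j`; block `i` has size `m`, the others have size `1`
  obtain ⟨⟨j, r⟩, hx⟩ := (finSigmaEquiv n b).surjective ((finCongr (circ_sum i)).symm x)
  have hxval : (x : ℕ) = (finSigmaEquiv n b ⟨j, r⟩ : ℕ) := by rw [hx]; rfl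
  simp only [circ, Equiv.permCongr_apply, ← hx, finCongr_apply, Fin.val_cast]
  rw [permCompose_one_finSigmaEquiv (m := b)]
  rw [coe_finSigmaEquiv_apply, sum_Iio_ite_eq_one] at hxval ⊢
  dsimp only at hxval ⊢
  have hr := r.isLt
  by_cases hji : j = i
  · subst hji
    simp only [b, dite_true, lt_irrefl, if_false, if_true] at hxval hr ⊢
    rw [dif_pos (by omega)]
    simp only [Equiv.permCongr_apply, finCongr_apply, finCongr_symm, Fin.val_cast]
    congr 3
    ext
    simp only [Fin.val_cast]
    omega
  · simp only [b, if_neg hji] at hr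
    have hji' : (j : ℕ) ≠ i := Fin.val_ne_of_ne hji
    simp only [dif_neg hji, Equiv.Perm.one_apply, ← hxval]
    rw [dif_neg]
    split_ifs at hxval <;> omega

section OneCircLast

variable (l : ℕ) {k N : ℕ} (h : l + 1 + k - 1 = N)

/-- `1_{l+1} ∘_{l+1} σ`: it fixes the first `l` points and acts by `σ` on the last `k` ones. -/
def oneCircLast (σ : Perm (Fin k)) : Perm (Fin N) :=
  (finCongr h).permCongr (circ (1 : Perm (Fin (l + 1))) (Fin.last l) σ)

def addFin (y : Fin k) : Fin N := ⟨l + y, by omega⟩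

variable {l h}

@[simp]
lemma coe_addFin (y : Fin k) : (addFin l h y : ℕ) = l + y := rfl

lemma addFin_strictMono : StrictMono (addFin l h) := fun _ _ hy => by
  rw [Fin.lt_def, coe_addFin, coe_addFin]
  exact Nat.add_lt_add_left hy l

lemma lt_or_exists_eq_addFin (x : Fin N) : (x : ℕ) < l ∨ ∃ y, x = addFin l h y := by
  refine or_iff_not_imp_left.2 fun hx => ⟨⟨x - l, by omega⟩, Fin.ext ?_⟩
  simp only [addFin]
  omega

lemma oneCircLast_apply_of_lt (σ : Perm (Fin k)) {x : Fin N} (hx : (x : ℕ) < l) :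
    oneCircLast l h σ x = x := by
  ext
  simp only [oneCircLast, Equiv.permCongr_apply, finCongr_apply, finCongr_symm, Fin.val_cast,
    coe_circ_one_apply, Fin.val_last]
  rw [dif_neg (by omega)]

lemma oneCircLast_apply_addFin (σ : Perm (Fin k)) (y : Fin k) :
    oneCircLast l h σ (addFin l h y) = addFin l h (σ y) := by
  ext
  simp only [oneCircLast, addFin, Equiv.permCongr_apply, finCongr_apply, finCongr_symm,
    Fin.val_cast, coe_circ_one_apply, Fin.val_last]
  rw [dif_pos (by omega)]
  simp

lemma oneCircLast_mul (σ σ' : Perm (Fin k)) :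
    oneCircLast l h (σ * σ') = oneCircLast l h σ * oneCircLast l h σ' := by
  ext1 x
  obtain hx | ⟨y, rfl⟩ := lt_or_exists_eq_addFin (h := h) x
  · simp only [Equiv.Perm.mul_apply, oneCircLast_apply_of_lt _ hx]
  · simp only [Equiv.Perm.mul_apply, oneCircLast_apply_addFin]

lemma oneCircLast_one : oneCircLast l h (1 : Perm (Fin k)) = 1 :=
  left_eq_mul.1 (by rw [← oneCircLast_mul, one_mul])

end OneCircLast

section Shuffle

variable {l k N : ℕ} {h : l + 1 + k - 1 = N}

variable (h) in
lemma isShuffle_iff_strictMono_comp_addFin {τ : Perm (Fin N)} :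
    IsShuffle l τ ↔
      (∀ i j : Fin N, i < j → (j : ℕ) < l → τ i < τ j) ∧ StrictMono (τ ∘ addFin l h) := by
  refine and_congr_right' ⟨fun hτ y₁ y₂ hy => hτ _ _ ?_ (Nat.le_add_right _ _),
    fun hτ i j hij hi => ?_⟩
  · exact addFin_strictMono.lt_iff_lt.2 hy
  · obtain hi' | ⟨y₁, rfl⟩ := lt_or_exists_eq_addFin (h := h) i
    · omega
    obtain hj | ⟨y₂, rfl⟩ := lt_or_exists_eq_addFin (h := h) j
    · rw [Fin.lt_def, coe_addFin] at hij
      omega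
    exact hτ (addFin_strictMono.lt_iff_lt.1 hij)

variable (h) in
lemma IsShuffle.strictMono_comp_addFin {τ : Perm (Fin N)} (hτ : IsShuffle l τ) :
    StrictMono (τ ∘ addFin l h) :=
  ((isShuffle_iff_strictMono_comp_addFin h).1 hτ).2

lemma mul_oneCircLast_comp_addFin (τ : Perm (Fin N)) (σ : Perm (Fin k)) :
    (τ * oneCircLast l h σ) ∘ addFin l h = (τ ∘ addFin l h) ∘ σ := by
  ext1 y
  simp [oneCircLast_apply_addFin]

lemma isShuffle3_mul_oneCircLast_iff {m : ℕ} {τ : Perm (Fin N)} (hτ : IsShuffle l τ)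
    (σ : Perm (Fin k)) : IsShuffle3 l m (τ * oneCircLast l h σ) ↔ IsShuffle m σ := by
  have key (y₁ y₂ : Fin k) :
      (τ * oneCircLast l h σ) (addFin l h y₁) < (τ * oneCircLast l h σ) (addFin l h y₂) ↔
        σ y₁ < σ y₂ := by
    rw [Equiv.Perm.mul_apply, Equiv.Perm.mul_apply, oneCircLast_apply_addFin,
      oneCircLast_apply_addFin]
    exact (hτ.strictMono_comp_addFin h).lt_iff_lt
  have tail_eq (x : Fin N) (hx : l ≤ (x : ℕ)) : ∃ y, x = addFin l h y :=
    (lt_or_exists_eq_addFin x).resolve_left (by omega)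
  constructor
  · rintro ⟨-, hmid, htail⟩
    refine ⟨fun y₁ y₂ hy hy₂ => (key y₁ y₂).1 ?_, fun y₁ y₂ hy hy₁ => (key y₁ y₂).1 ?_⟩
    · exact hmid _ _ (addFin_strictMono.lt_iff_lt.2 hy) (by simp) (by simp [hy₂])
    · exact htail _ _ (addFin_strictMono.lt_iff_lt.2 hy) (by simp [hy₁])
  · intro hσ
    refine ⟨fun i j hij hj => ?_, fun i j hij hi hj => ?_, fun i j hij hi => ?_⟩
    · rw [Equiv.Perm.mul_apply, Equiv.Perm.mul_apply, oneCircLast_apply_of_lt _ hj,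
        oneCircLast_apply_of_lt _ (lt_trans (Fin.lt_def.1 hij) hj)]
      exact hτ.1 i j hij hj
    all_goals
      obtain ⟨y₁, rfl⟩ := tail_eq i (by omega)
      obtain ⟨y₂, rfl⟩ := tail_eq j (by have := Fin.lt_def.1 hij; omega)
      simp only [coe_addFin] at *
      refine (key y₁ y₂).2 ?_
    · exact hσ.1 _ _ (addFin_strictMono.lt_iff_lt.1 hij) (by omega)
    · exact hσ.2 _ _ (addFin_strictMono.lt_iff_lt.1 hij) (by omega)

lemma eq_of_mul_oneCircLast_eq {τ₁ τ₂ : Perm (Fin N)} {σ₁ σ₂ : Perm (Fin k)}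
    (hτ₁ : IsShuffle l τ₁) (hτ₂ : IsShuffle l τ₂)
    (heq : τ₁ * oneCircLast l h σ₁ = τ₂ * oneCircLast l h σ₂) : σ₁ = σ₂ ∧ τ₁ = τ₂ := by
  have ht₁ := hτ₁.strictMono_comp_addFin h
  have ht₂ := hτ₂.strictMono_comp_addFin h
  have hg : (τ₁ ∘ addFin l h) ∘ σ₁ = (τ₂ ∘ addFin l h) ∘ σ₂ := by
    rw [← mul_oneCircLast_comp_addFin, ← mul_oneCircLast_comp_addFin, heq]
  -- both are the values of `ρ := τᵢ * oneCircLast l h σᵢ` on the tail, in increasing order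
  have ht : τ₁ ∘ addFin l h = τ₂ ∘ addFin l h := by
    have cancel (f : Fin k → Fin N) (σ : Perm (Fin k)) : (f ∘ σ) ∘ ⇑σ⁻¹ = f := by
      ext1; simp
    have := Tuple.unique_monotone (f := (τ₁ ∘ addFin l h) ∘ σ₁) (σ := σ₁⁻¹) (τ := σ₂⁻¹)
    rw [cancel, hg, cancel] at this
    exact this ht₁.monotone ht₂.monotone
  have hσ : σ₁ = σ₂ := by
    rw [← ht] at hg
    exact DFunLike.coe_injective (ht₁.injective.comp_left hg)
  subst hσ
  exact ⟨rfl, mul_right_cancel heq⟩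

lemma exists_isShuffle_mul_oneCircLast_eq {ρ : Perm (Fin N)}
    (hρ : ∀ i j : Fin N, i < j → (j : ℕ) < l → ρ i < ρ j) :
    ∃ τ σ, IsShuffle l τ ∧ τ * oneCircLast l h σ = ρ := by
  set s := Tuple.sort (ρ ∘ addFin l h)
  refine ⟨ρ * oneCircLast l h s, s⁻¹,
    (isShuffle_iff_strictMono_comp_addFin h).2 ⟨fun i j hij hj => ?_, ?_⟩, ?_⟩
  · rw [Equiv.Perm.mul_apply, Equiv.Perm.mul_apply, oneCircLast_apply_of_lt _ hj,
      oneCircLast_apply_of_lt _ (lt_trans (Fin.lt_def.1 hij) hj)]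
    exact hρ i j hij hj
  · rw [mul_oneCircLast_comp_addFin]
    exact (Tuple.monotone_sort _).strictMono_of_injective
      (ρ.injective.comp (addFin_strictMono.injective.comp s.injective))
  · rw [mul_assoc, ← oneCircLast_mul, mul_inv_cancel, oneCircLast_one, mul_one]

end Shuffle

theorem bijOn_mul_oneCircLast {l k N : ℕ} (h : l + 1 + k - 1 = N) (m : ℕ) :
    Set.BijOn (fun p : Perm (Fin k) × Perm (Fin N) => p.2 * oneCircLast l h p.1)
      ({σ | IsShuffle m σ} ×ˢ {τ | IsShuffle l τ}) {ρ | IsShuffle3 l m ρ} := by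
  refine ⟨fun p ⟨hσ, hτ⟩ => (isShuffle3_mul_oneCircLast_iff hτ p.1).2 hσ, ?_, ?_⟩
  · rintro ⟨σ₁, τ₁⟩ ⟨-, hτ₁⟩ ⟨σ₂, τ₂⟩ ⟨-, hτ₂⟩ heq
    obtain ⟨rfl, rfl⟩ := eq_of_mul_oneCircLast_eq hτ₁ hτ₂ heq
    rfl
  · intro ρ hρ
    obtain ⟨τ, σ, hτ, rfl⟩ := exists_isShuffle_mul_oneCircLast_eq (h := h) hρ.1
    exact ⟨(σ, τ), ⟨(isShuffle3_mul_oneCircLast_iff hτ σ).1 hρ, hτ⟩, rfl⟩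

/-- **Proposition 2.6(c)** of Bakalov–De Sole–Heluani–Kac: for `l, m, n ≥ 1`, the map
`(σ, τ) ↦ τ · (1_{l+1} ∘_{l+1} σ)` is a bijection from `S_{m,n} × S_{l,m+n}` onto
`S_{l,m,n}`. -/
theorem shuffle_decomposition_c (l m n : ℕ) :
    Set.BijOn
      (fun p : Equiv.Perm (Fin (m + n)) × Equiv.Perm (Fin (l + m + n)) =>
        p.2 *
          (finCongr (show l + 1 + (m + n) - 1 = l + m + n by omega)).permCongr
            (circ (1 : Equiv.Perm (Fin (l + 1))) ⟨l, by omega⟩ p.1))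
      ({σ : Equiv.Perm (Fin (m + n)) | IsShuffle m σ} ×ˢ
        {τ : Equiv.Perm (Fin (l + m + n)) | IsShuffle l τ})
      {σ : Equiv.Perm (Fin (l + m + n)) | IsShuffle3 l m σ} :=
  bijOn_mul_oneCircLast (by omega) m
end

section
/- For all m, n ≥ 1, the map σ ↦ σ·(1_n∘_1(1,2)∘_1 1_m) is a bijection from {σ ∈ S_{m+1,n−1} : σ(1) = 1} onto {σ ∈ S_{m,n} : σ(m+1) = 1}; here 1_n∘_1(1,2)∘_1 1_m ∈ S_{m+n} equals the cyclic permutation (1,2,…,m+1), sending 1 ↦ 2 ↦ ⋯ ↦ m+1 ↦ 1 and fixing m+2,…,m+n, and · denotes the product in S_{m+n}. -/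
open Equiv

/-!
The cycle `c = (0 1 … m)` is `Fin.cycleRange m`. Both shuffle conditions say that a permutation
is increasing on two consecutive blocks. If `σ 0 = 0`, then `0` is the least value of `σ` and
`(σ * c) m = 0` the least value of `σ * c`, so either of them is increasing on a block starting at
that point iff it is increasing on the rest of the block. Since `c` maps `[0, m)` increasingly onto
`(0, m]` and fixes `(m, m + n)`, this makes `σ` an `(m+1)`-shuffle iff `σ * c` is an `m`-shuffle;
hence right multiplication by `c` and by `c⁻¹` exchange the two sets.
-/

open Set Function

theorem strictMonoOn_comp_iff_image {α β γ : Type*} [LinearOrder α] [Preorder β] [Preorder γ]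
    {f : α → β} {g : β → γ} {s : Set α} (hf : StrictMonoOn f s) :
    StrictMonoOn (g ∘ f) s ↔ StrictMonoOn g (f '' s) := by
  refine ⟨?_, fun hg => hg.comp hf (mapsTo_image f s)⟩
  rintro h _ ⟨x, hx, rfl⟩ _ ⟨y, hy, rfl⟩ hxy
  exact h hx hy ((hf.lt_iff_lt hx hy).1 hxy)

theorem strictMonoOn_insert_iff_of_injective {α β : Type*} [Preorder α] [PartialOrder β]
    {f : α → β} {s : Set α} {a : α} (hf : Injective f) (hfa : ∀ b, f a ≤ f b)
    (ha : ∀ x ∈ s, a ≤ x) : StrictMonoOn f (insert a s) ↔ StrictMonoOn f s :=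
  (strictMonoOn_insert_iff_of_forall_ge ha).trans
    (and_iff_right fun b _ hab => (hfa b).lt_of_ne (hf.ne hab.ne))

variable {N : ℕ}

theorem isShuffle_iff_strictMonoOn (m : ℕ) (σ : Perm (Fin N)) :
    IsShuffle m σ ↔
      StrictMonoOn σ {j | (j : ℕ) < m} ∧ StrictMonoOn σ {j | m ≤ (j : ℕ)} := by
  refine and_congr ⟨fun h a ha b hb hab => h a b hab hb, fun h a b hab hb => ?_⟩
    ⟨fun h a ha b _ hab => h a b hab ha, fun h a b hab ha => ?_⟩
  · exact h (lt_trans (Fin.lt_def.1 hab) hb) hb hab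
  · exact h ha (le_trans ha (Fin.lt_def.1 hab).le) hab

theorem isShuffle_iff_strictMonoOn_Iio_Ici (i : Fin N) (σ : Perm (Fin N)) :
    IsShuffle i σ ↔ StrictMonoOn σ (Iio i) ∧ StrictMonoOn σ (Ici i) :=
  isShuffle_iff_strictMonoOn i σ

theorem isShuffle_succ_iff_strictMonoOn_Iic_Ioi (i : Fin N) (σ : Perm (Fin N)) :
    IsShuffle (i + 1) σ ↔ StrictMonoOn σ (Iic i) ∧ StrictMonoOn σ (Ioi i) := by
  have hIic : {j : Fin N | (j : ℕ) < i + 1} = Iic i := ext fun _ => Nat.lt_succ_iff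
  have hIoi : {j : Fin N | (i : ℕ) + 1 ≤ j} = Ioi i := ext fun _ => Nat.succ_le_iff
  rw [isShuffle_iff_strictMonoOn, hIic, hIoi]

namespace Fin

theorem strictMonoOn_cycleRange_Iio (i : Fin N) : StrictMonoOn (cycleRange i) (Iio i) :=
  fun a ha b hb hab => by
    rw [Fin.lt_def, coe_cycleRange_of_lt ha, coe_cycleRange_of_lt hb]
    exact Nat.succ_lt_succ hab

theorem insert_zero_image_cycleRange_Iio [NeZero N] (i : Fin N) :
    insert 0 (cycleRange i '' Iio i) = Iic i := by
  ext j
  simp only [mem_insert_iff, mem_image, mem_Iio, mem_Iic]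
  constructor
  · rintro (rfl | ⟨k, hk, rfl⟩)
    · exact Fin.zero_le i
    · exact Fin.le_def.2 ((coe_cycleRange_of_lt hk).trans_le hk)
  · intro hj
    rcases Nat.eq_zero_or_pos j with hj0 | hj0
    · exact Or.inl (Fin.ext (by simpa using hj0))
    · have hk : (j : ℕ) - 1 < i := by have := Fin.le_def.1 hj; omega
      refine Or.inr ⟨⟨j - 1, hk.trans i.isLt⟩, hk, Fin.ext ?_⟩
      rw [coe_cycleRange_of_lt (Fin.lt_def.2 hk), Fin.val_mk]
      omega

theorem eqOn_cycleRange_Ioi (i : Fin N) : EqOn (cycleRange i) id (Ioi i) :=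
  fun _ hj => cycleRange_of_gt hj

theorem eq_cycleRange_of_apply (i : Fin N) {c : Perm (Fin N)}
    (hlt : ∀ j, j < i → (c j : ℕ) = j + 1) (hself : (c i : ℕ) = 0)
    (hgt : ∀ j, i < j → c j = j) : c = cycleRange i := by
  ext j
  rcases lt_trichotomy j i with h | rfl | h
  · rw [hlt j h, coe_cycleRange_of_lt h]
  · rw [hself, coe_cycleRange_of_le le_rfl, if_pos rfl]
  · rw [hgt j h, cycleRange_of_gt h]

end Fin

open Fin

theorem isShuffle_mul_cycleRange_iff [NeZero N] (i : Fin N) {σ : Perm (Fin N)} (hσ : σ 0 = 0) :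
    IsShuffle i (σ * cycleRange i) ↔ IsShuffle (i + 1) σ := by
  have hmin : ∀ b, σ 0 ≤ σ b := fun b => hσ.symm ▸ Fin.zero_le (σ b)
  rw [isShuffle_iff_strictMonoOn_Iio_Ici, isShuffle_succ_iff_strictMonoOn_Iic_Ioi, Perm.coe_mul]
  refine and_congr ?_ ?_
  · rw [strictMonoOn_comp_iff_image (strictMonoOn_cycleRange_Iio i),
      ← insert_zero_image_cycleRange_Iio,
      strictMonoOn_insert_iff_of_injective σ.injective hmin fun j _ => Fin.zero_le j]
  · have hmin' : ∀ b, (σ ∘ cycleRange i) i ≤ (σ ∘ cycleRange i) b := fun b => by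
      simpa only [comp_apply, cycleRange_self] using hmin _
    rw [← Ioi_insert, strictMonoOn_insert_iff_of_injective (s := Ioi i)
      (σ.injective.comp (cycleRange i).injective) hmin' fun _ hj => le_of_lt hj,
      (eqOn_cycleRange_Ioi i).comp_left.congr_strictMonoOn]
    rfl

theorem bijOn_mul_cycleRange [NeZero N] (i : Fin N) :
    BijOn (· * cycleRange i)
      {σ | IsShuffle (i + 1) σ ∧ σ 0 = 0} {τ | IsShuffle i τ ∧ τ i = 0} := by
  refine InvOn.bijOn (f' := (· * (cycleRange i)⁻¹))
    ⟨fun σ _ => mul_inv_cancel_right σ _, fun τ _ => inv_mul_cancel_right τ _⟩ ?_ ?_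
  · rintro σ ⟨hshuffle, hσ⟩
    exact ⟨(isShuffle_mul_cycleRange_iff i hσ).2 hshuffle, by simpa using hσ⟩
  · rintro τ ⟨hshuffle, hτ⟩
    have hτ' : (τ * (cycleRange i)⁻¹) 0 = 0 := by
      simpa [Perm.inv_def, cycleRange_symm_zero] using hτ
    refine ⟨(isShuffle_mul_cycleRange_iff i hτ').1 ?_, hτ'⟩
    rwa [inv_mul_cancel_right]

/-- **Proposition 2.7(b)** of Bakalov–De Sole–Heluani–Kac: for `m, n ≥ 1`, right
multiplication by the cyclic permutation `1_n ∘_1 (1,2) ∘_1 1_m = (1,2,…,m+1) ∈ S_{m+n}`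
(which sends `1 ↦ 2 ↦ ⋯ ↦ m+1 ↦ 1` and fixes `m+2,…,m+n`; written here `0`-indexed)
is a bijection from `{σ ∈ S_{m+1,n-1} | σ(1) = 1}` onto `{σ ∈ S_{m,n} | σ(m+1) = 1}`. -/
theorem shuffle_cycle_bijOn (m n : ℕ) (hn : 1 ≤ n)
    (c : Equiv.Perm (Fin (m + n)))
    (hc : ∀ i : Fin (m + n),
      ((i : ℕ) < m → (c i : ℕ) = (i : ℕ) + 1) ∧
      ((i : ℕ) = m → (c i : ℕ) = 0) ∧
      (m < (i : ℕ) → c i = i)) :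
    Set.BijOn (fun σ => σ * c)
      {σ : Equiv.Perm (Fin (m + n)) | IsShuffle (m + 1) σ ∧ σ ⟨0, by omega⟩ = ⟨0, by omega⟩}
      {σ : Equiv.Perm (Fin (m + n)) | IsShuffle m σ ∧ σ ⟨m, by omega⟩ = ⟨0, by omega⟩} := by
  have : NeZero (m + n) := ⟨by omega⟩
  obtain rfl : c = cycleRange ⟨m, by omega⟩ :=
    eq_cycleRange_of_apply _ (fun j hj => (hc j).1 hj) ((hc _).2.1 rfl) fun j hj => (hc j).2.2 hj
  have hzero : (⟨0, by omega⟩ : Fin (m + n)) = 0 := rfl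
  simpa only [hzero] using bijOn_mul_cycleRange (⟨m, by omega⟩ : Fin (m + n))
end

section
/- Equivariance of ∘_i-products of permutations: for all β, σ ∈ S_n, α, τ ∈ S_m and 1 ≤ i ≤ n, one has (βσ)∘_i(ατ) = (β∘_{σ(i)}α)·(σ∘_iτ) in S_{n+m−1}, where · denotes the product in the symmetric group. -/
open Equiv

/-! In block coordinates `Σ j, Fin (m j)` a composition `σ(τ_1,…,τ_n)` sends the point `a` of
block `j` to the point `τ_j(a)` of block `σ(j)`. In `σ ∘_i τ` every block but the `i`-th has
size one, and after relabelling by `σ` the block of size `m` sits in slot `σ(i)`. Hence both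
sides of the identity send the point `a` of block `j` to the point `α(τ(a))` (if `j = i`), resp.
`a` (if `j ≠ i`), of block `β(σ(j))`. -/

lemma finSigmaEquiv_congr_val {n : ℕ} {m m' : Fin n → ℕ} (h : m = m') (j : Fin n)
    (a : Fin (m j)) :
    (finSigmaEquiv n m' ⟨j, Fin.cast (congrFun h j) a⟩ : ℕ) = finSigmaEquiv n m ⟨j, a⟩ := by
  subst h
  rfl

lemma permCompose_finSigmaEquiv {n : ℕ} {m : Fin n → ℕ} (σ : Equiv.Perm (Fin n))
    (τ : ∀ i, Equiv.Perm (Fin (m i))) (j : Fin n) (a : Fin (m j)) :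
    permCompose σ τ (finSigmaEquiv n m ⟨j, a⟩) =
      finCongr (Equiv.sum_comp σ.symm m) (finSigmaEquiv n (fun k => m (σ.symm k))
        ⟨σ j, Fin.cast (congrArg m (σ.symm_apply_apply j).symm) (τ j a)⟩) := by
  simp only [permCompose, Equiv.trans_apply, Equiv.symm_apply_apply]
  rfl

section Circ

variable {n m : ℕ}

lemma circ_size_perm (σ : Equiv.Perm (Fin n)) (i j : Fin n) :
    (if j = i then m else 1) = if σ j = σ i then m else 1 := by
  simp only [σ.apply_eq_iff_eq]

def circBlockPerm (i : Fin n) (α : Equiv.Perm (Fin m)) (j : Fin n) :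
    Equiv.Perm (Fin (if j = i then m else 1)) :=
  if h : j = i then (finCongr (if_pos h).symm).permCongr α else 1

def circBlockEquiv (i : Fin n) :
    (Σ j : Fin n, Fin (if j = i then m else 1)) ≃ Fin (n + m - 1) :=
  (finSigmaEquiv n _).trans (finCongr (circ_sum i))

lemma circBlockPerm_mul (i : Fin n) (α τ : Equiv.Perm (Fin m)) (j : Fin n) :
    circBlockPerm i (α * τ) j = circBlockPerm i α j * circBlockPerm i τ j := by
  by_cases h : j = i
  · subst h
    ext a
    simp [circBlockPerm]
  · simp [circBlockPerm, h]

lemma circBlockPerm_apply_cast (σ : Equiv.Perm (Fin n)) (i : Fin n) (α : Equiv.Perm (Fin m))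
    (j : Fin n) (h : (if j = i then m else 1) = if σ j = σ i then m else 1)
    (a : Fin (if j = i then m else 1)) :
    circBlockPerm (σ i) α (σ j) (Fin.cast h a) = Fin.cast h (circBlockPerm i α j a) := by
  by_cases hji : j = i
  · subst hji
    ext
    simp [circBlockPerm]
  · have hσ : σ j ≠ σ i := σ.injective.ne hji
    simp [circBlockPerm, hji, hσ]

lemma circ_circBlockEquiv (β : Equiv.Perm (Fin n)) (i : Fin n) (α : Equiv.Perm (Fin m))
    (j : Fin n) (a : Fin (if j = i then m else 1)) :
    circ β i α (circBlockEquiv i ⟨j, a⟩) =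
      circBlockEquiv (β i) ⟨β j, Fin.cast (circ_size_perm β i j) (circBlockPerm i α j a)⟩ := by
  have hsize : (fun k => if β.symm k = i then m else 1) = fun k => if k = β i then m else 1 := by
    funext k
    simp only [β.symm_apply_eq]
  have hcirc : (circ β i α (circBlockEquiv i ⟨j, a⟩) : ℕ) =
      permCompose β (circBlockPerm i α) (finSigmaEquiv n _ ⟨j, a⟩) := rfl
  ext
  rw [hcirc, permCompose_finSigmaEquiv, finCongr_apply, Fin.val_cast,
    ← finSigmaEquiv_congr_val hsize]
  rfl

end Circ

/-- **Equivariance of `∘_i`-products of permutations** (equation (2.9b) of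
Bakalov–De Sole–Heluani–Kac): for all `β, σ ∈ S_n`, `α, τ ∈ S_m` and `i ∈ {1,…,n}`,
`(βσ) ∘_i (ατ) = (β ∘_{σ(i)} α) · (σ ∘_i τ)` in `S_{n+m-1}`. -/
theorem circ_equivariance (n m : ℕ) (β σ : Equiv.Perm (Fin n)) (α τ : Equiv.Perm (Fin m))
    (i : Fin n) :
    circ (β * σ) i (α * τ) = circ β (σ i) α * circ σ i τ := by
  ext x : 1
  obtain ⟨⟨j, a⟩, rfl⟩ := (circBlockEquiv i).surjective x
  rw [Equiv.Perm.mul_apply, circ_circBlockEquiv, circ_circBlockEquiv, circ_circBlockEquiv,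
    circBlockPerm_apply_cast, circBlockPerm_mul]
  rfl
end

section
/- Let F be a field of characteristic 0, n ≥ 1, and K = F(z_1,…,z_n). Let f := ∏_{1 ≤ i < j ≤ n} (z_i − z_j)^{−1} ∈ K, and let O*_n ⊂ K be the subring F[z_1,…,z_n][(z_i − z_j)^{−1} : 1 ≤ i < j ≤ n] (the localization of the polynomial ring at the diagonals). Then the smallest F-linear subspace of K containing f and stable under multiplication by each variable z_i (1 ≤ i ≤ n) and under each partial derivation ∂_{z_i} (1 ≤ i ≤ n) equals O*_n. Equivalently, f is a cyclic vector of O*_n regarded as a module over the algebra of polynomial-coefficient differential operators in z_1,…,z_n. -/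
/-!
Write `g_m = ∏_{i<j} (z_i - z_j)^{-m_ij}`, so that `f = g_1` and `O*_n` is spanned over
`F[z]` by the `g_m`; as the submodules in question are `F[z]`-stable, it suffices to reach
every `g_m`. Multiplying `f` by polynomials gives every `g_m` with `m ≤ 1`. When every `j`
has at most one `i < j` with `m_ij ≠ 0` (the edges `ij` form a forest), `∂_{z_j}` applied to
`g_{m - δ_ij}` is `(m_ij - 1) g_m` plus multiples of `g_{m'}` in which some exponent `m_jk`
with `k > j` was raised, so induction on `∑ m_ij (n - j)` gives all forests. An arbitrary `m`
is reduced to forests by the partial fraction identity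
`1/((z_a - z_j)(z_b - z_j)) = 1/(z_a - z_b) · (1/(z_b - z_j) - 1/(z_a - z_j))`,
which lowers `∑ m_ij j` when `a < b < j`.
-/

open Finset Function

namespace Derivation

variable {R A : Type*} [CommSemiring R] [CommSemiring A] [Algebra R A]

theorem leibniz_prod (D : Derivation R A A) {ι : Type*} [DecidableEq ι] (s : Finset ι)
    (f : ι → A) : D (∏ i ∈ s, f i) = ∑ i ∈ s, (∏ j ∈ s.erase i, f j) * D (f i) := by
  induction s using Finset.induction_on with
  | empty => simp
  | insert a s ha ih =>
    rw [prod_insert ha, leibniz, ih, sum_insert ha, erase_insert ha, smul_eq_mul, smul_eq_mul,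
      mul_sum, add_comm]
    congr 1
    refine sum_congr rfl fun i hi => ?_
    rw [erase_insert_of_ne (ne_of_mem_of_not_mem hi ha).symm,
      prod_insert fun h => ha (mem_of_mem_erase h), mul_assoc]

theorem map_mem_adjoin (D : Derivation R A A) {s : Set A}
    (hs : ∀ x ∈ s, D x ∈ Algebra.adjoin R s) {x : A} (hx : x ∈ Algebra.adjoin R s) :
    D x ∈ Algebra.adjoin R s := by
  induction hx using Algebra.adjoin_induction with
  | mem x hx => exact hs x hx
  | algebraMap r => simp
  | add x y _ _ hx hy => rw [map_add]; exact add_mem hx hy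
  | mul x y hx' hy' hx hy =>
    rw [leibniz, smul_eq_mul, smul_eq_mul]
    exact add_mem (mul_mem hx' hy) (mul_mem hy' hx)

end Derivation

theorem Submodule.mul_mem_of_mem_adjoin {R A : Type*} [CommSemiring R] [Semiring A]
    [Algebra R A] (W : Submodule R A) {s : Set A} (hs : ∀ a ∈ s, ∀ x ∈ W, a * x ∈ W) {a : A}
    (ha : a ∈ Algebra.adjoin R s) {x : A} (hx : x ∈ W) : a * x ∈ W := by
  induction ha using Algebra.adjoin_induction generalizing x with
  | mem a ha => exact hs a ha x hx
  | algebraMap r => rw [← Algebra.smul_def]; exact W.smul_mem r hx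
  | add a b _ _ ha hb => rw [add_mul]; exact W.add_mem (ha hx) (hb hx)
  | mul a b _ _ ha hb => rw [mul_assoc]; exact ha (hb hx)

namespace DiagonalLocalization

theorem sub_single_add_single {ι : Type*} [DecidableEq ι] {m : ι → ℕ} {p : ι} (hp : m p ≠ 0) :
    m - Pi.single p 1 + Pi.single p 1 = m := by
  funext q
  by_cases hq : q = p
  · subst hq
    simp only [Pi.add_apply, Pi.sub_apply, Pi.single_eq_same]
    omega
  · simp [hq]

variable {F K : Type*} [Field F] [Field K] [Algebra F K] {n : ℕ}

def pairs (n : ℕ) : Finset (Fin n × Fin n) := univ.filter fun p => p.1 < p.2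

theorem mem_pairs {p : Fin n × Fin n} : p ∈ pairs n ↔ p.1 < p.2 := by simp [pairs]

theorem mk_mem_pairs {i j : Fin n} (h : i < j) : (i, j) ∈ pairs n := mem_pairs.2 h

/-- The ring `O*_n`. -/
def diagLocalization (F : Type*) [Field F] [Algebra F K] (z : Fin n → K) : Subalgebra F K :=
  Algebra.adjoin F (Set.range z ∪ {x : K | ∃ i j : Fin n, i < j ∧ x = (z i - z j)⁻¹})

variable {z : Fin n → K}

theorem derivation_mem_diagLocalization (d : Derivation F K K)
    (hd : ∀ j, d (z j) ∈ diagLocalization F z) {x : K} (hx : x ∈ diagLocalization F z) :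
    d x ∈ diagLocalization F z := by
  refine d.map_mem_adjoin ?_ hx
  rintro _ (⟨j, rfl⟩ | ⟨i, j, hij, rfl⟩)
  · exact hd j
  · have hv : (z i - z j)⁻¹ ∈ diagLocalization F z :=
      Algebra.subset_adjoin (Or.inr ⟨i, j, hij, rfl⟩)
    rw [d.leibniz_inv, map_sub, smul_eq_mul]
    exact mul_mem (neg_mem (pow_mem hv 2)) (sub_mem (hd i) (hd j))

variable (z) in
def invMonomial (m : Fin n × Fin n → ℕ) : K :=
  ∏ p ∈ pairs n, (z p.1 - z p.2)⁻¹ ^ m p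

theorem invMonomial_add (m m' : Fin n × Fin n → ℕ) :
    invMonomial z (m + m') = invMonomial z m * invMonomial z m' := by
  simp only [invMonomial, Pi.add_apply, pow_add, prod_mul_distrib]

theorem invMonomial_single {p : Fin n × Fin n} (hp : p ∈ pairs n) :
    invMonomial z (Pi.single p 1) = (z p.1 - z p.2)⁻¹ := by
  rw [invMonomial, prod_eq_single_of_mem p hp fun q _ hq => by rw [Pi.single_eq_of_ne hq, pow_zero],
    Pi.single_eq_same, pow_one]

theorem invMonomial_add_single (m : Fin n × Fin n → ℕ) {p : Fin n × Fin n} (hp : p ∈ pairs n) :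
    invMonomial z (m + Pi.single p 1) = invMonomial z m * (z p.1 - z p.2)⁻¹ := by
  rw [invMonomial_add, invMonomial_single hp]

theorem diagLocalization_le_of_invMonomial_mem {W : Submodule F K}
    (hWz : ∀ i, ∀ x ∈ W, z i * x ∈ W) (hW : ∀ m, invMonomial z m ∈ W) :
    Subalgebra.toSubmodule (diagLocalization F z) ≤ W := by
  let T : Submodule F K := ⨅ m, W.comap (LinearMap.mulRight F (invMonomial z m))
  have hT : ∀ x, x ∈ T ↔ ∀ m, x * invMonomial z m ∈ W := by simp [T]
  have hTgen : ∀ a ∈ Set.range z ∪ {x : K | ∃ i j : Fin n, i < j ∧ x = (z i - z j)⁻¹},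
      ∀ x ∈ T, a * x ∈ T := by
    rintro _ (⟨i, rfl⟩ | ⟨i, j, hij, rfl⟩) x hx <;> refine (hT _).2 fun m => ?_
    · rw [mul_assoc]
      exact hWz i _ ((hT x).1 hx m)
    · have hv : (z i - z j)⁻¹ * x * invMonomial z m =
          x * invMonomial z (m + Pi.single (i, j) 1) := by
        rw [invMonomial_add_single m (mk_mem_pairs hij)]
        ring
      exact hv ▸ (hT x).1 hx _
  intro x hx
  have h1 : (1 : K) ∈ T := (hT 1).2 fun m => by simpa using hW m
  simpa [invMonomial] using (hT _).1 (T.mul_mem_of_mem_adjoin hTgen hx h1) 0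

theorem derivation_invMonomial (d : Derivation F K K) (a : Fin n → F)
    (hd : ∀ j, d (z j) = algebraMap F K (a j)) (m : Fin n × Fin n → ℕ) :
    d (invMonomial z m) =
      ∑ p ∈ pairs n, ((m p : F) * (a p.2 - a p.1)) • invMonomial z (m + Pi.single p 1) := by
  rw [invMonomial, d.leibniz_prod]
  refine sum_congr rfl fun p hp => ?_
  rw [invMonomial_add_single m hp, invMonomial, ← mul_prod_erase _ _ hp, d.leibniz_pow,
    d.leibniz_inv, map_sub, hd, hd]
  simp only [smul_eq_mul, nsmul_eq_mul]
  rw [Algebra.smul_def, map_mul, map_natCast, map_sub]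
  cases m p with
  | zero => simp
  | succ k => rw [Nat.add_sub_cancel]; ring

theorem invMonomial_mem_of_le (hz : Injective z) {W : Submodule F K}
    (hWz : ∀ i, ∀ x ∈ W, z i * x ∈ W) {m m' : Fin n × Fin n → ℕ}
    (hm : ∀ p ∈ pairs n, m p ≤ m' p) (h : invMonomial z m' ∈ W) : invMonomial z m ∈ W := by
  have hpoly : ∏ p ∈ pairs n, (z p.1 - z p.2) ^ (m' p - m p) ∈ Algebra.adjoin F (Set.range z) :=
    prod_mem fun p _ => pow_mem (sub_mem (Algebra.subset_adjoin (Set.mem_range_self _))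
      (Algebra.subset_adjoin (Set.mem_range_self _))) _
  have heq : invMonomial z m =
      (∏ p ∈ pairs n, (z p.1 - z p.2) ^ (m' p - m p)) * invMonomial z m' := by
    rw [invMonomial, invMonomial, ← prod_mul_distrib]
    refine prod_congr rfl fun p hp => ?_
    have hu : z p.1 - z p.2 ≠ 0 := sub_ne_zero.2 (hz.ne (mem_pairs.1 hp).ne)
    obtain ⟨k, hk⟩ := Nat.exists_eq_add_of_le (hm p hp)
    rw [hk, Nat.add_sub_cancel_left, pow_add, mul_left_comm, ← mul_pow, mul_inv_cancel₀ hu,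
      one_pow, mul_one]
  rw [heq]
  exact W.mul_mem_of_mem_adjoin (by rintro _ ⟨i, rfl⟩; exact hWz i) hpoly h

def IsForest (m : Fin n × Fin n → ℕ) : Prop :=
  ∀ p ∈ pairs n, ∀ q ∈ pairs n, p.2 = q.2 → m p ≠ 0 → m q ≠ 0 → p = q

theorem IsForest.mono {m m' : Fin n × Fin n → ℕ} (h : IsForest m)
    (h' : ∀ p, m' p ≠ 0 → m p ≠ 0) : IsForest m' :=
  fun p hp q hq hpq hmp hmq => h p hp q hq hpq (h' p hmp) (h' q hmq)

def weight (w m : Fin n × Fin n → ℕ) : ℕ := ∑ p ∈ pairs n, m p * w p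

theorem weight_add_single (w m : Fin n × Fin n → ℕ) {p : Fin n × Fin n} (hp : p ∈ pairs n) :
    weight w (m + Pi.single p 1) = weight w m + w p := by
  simp [weight, add_mul, sum_add_distrib, Pi.single_apply, hp]

theorem invMonomial_add_single_mem_of_derivation [CharZero F] {W : Submodule F K}
    (d : Derivation F K K) (b : Fin n) (hd : ∀ j, d (z j) = if b = j then 1 else 0)
    (hWd : ∀ x ∈ W, d x ∈ W) {m : Fin n × Fin n → ℕ} (hm : invMonomial z m ∈ W)
    {e : Fin n × Fin n} (he : e ∈ pairs n) (heb : e.2 = b) (hme : m e ≠ 0)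
    (hin : ∀ p ∈ pairs n, p ≠ e → m p ≠ 0 → p.2 ≠ b)
    (hout : ∀ p ∈ pairs n, p.1 = b → m p ≠ 0 → invMonomial z (m + Pi.single p 1) ∈ W) :
    invMonomial z (m + Pi.single e 1) ∈ W := by
  have hda : ∀ j, d (z j) = algebraMap F K (if b = j then 1 else 0) := fun j => by
    rw [hd]
    split_ifs <;> simp
  have hsum := hWd _ hm
  rw [derivation_invMonomial d _ hda, ← add_sum_erase _ _ he] at hsum
  have hrest : ∑ p ∈ (pairs n).erase e,
      ((m p : F) * ((if b = p.2 then 1 else 0) - if b = p.1 then 1 else 0)) •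
        invMonomial z (m + Pi.single p 1) ∈ W := by
    refine sum_mem fun p hp => ?_
    obtain ⟨hpe, hp⟩ := mem_erase.1 hp
    by_cases hmp : m p = 0
    · simp [hmp]
    by_cases hpb : p.1 = b
    · exact W.smul_mem _ (hout p hp hpb hmp)
    · simp [Ne.symm (hin p hp hpe hmp), Ne.symm hpb]
  have he1 : e.1 ≠ b := heb ▸ (mem_pairs.1 he).ne
  rw [W.add_mem_iff_left hrest, if_pos heb.symm, if_neg (Ne.symm he1), sub_zero, mul_one] at hsum
  exact (W.smul_mem_iff (Nat.cast_ne_zero.2 hme)).1 hsum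

theorem invMonomial_mem_of_isForest [CharZero F] (hz : Injective z) {W : Submodule F K}
    (hWz : ∀ i, ∀ x ∈ W, z i * x ∈ W) (D : Fin n → Derivation F K K)
    (hD : ∀ i j, D i (z j) = if i = j then 1 else 0) (hWD : ∀ i, ∀ x ∈ W, D i x ∈ W)
    (hf : invMonomial z 1 ∈ W) (m : Fin n × Fin n → ℕ) (hm : IsForest m) :
    invMonomial z m ∈ W := by
  induction hN : weight (fun p => n - p.2) m using Nat.strong_induction_on generalizing m with
  | _ N ih =>
  by_cases hle : ∀ p ∈ pairs n, m p ≤ 1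
  · exact invMonomial_mem_of_le hz hWz hle hf
  push Not at hle
  obtain ⟨e, he, hme⟩ := hle
  set m₀ := m - Pi.single e 1
  have hm₀ : m₀ + Pi.single e 1 = m := sub_single_add_single (by omega)
  have hsupp : ∀ q, m₀ q ≠ 0 → m q ≠ 0 := fun q => by
    simp only [m₀, Pi.sub_apply]
    omega
  have hN₀ : weight (fun p => n - p.2) m₀ + (n - e.2) = N := by
    rw [← hN, ← hm₀, weight_add_single _ _ he]
  have he₀ : m₀ e ≠ 0 := by
    simp only [m₀, Pi.sub_apply, Pi.single_eq_same]
    omega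
  rw [← hm₀]
  refine invMonomial_add_single_mem_of_derivation (D e.2) e.2 (hD e.2) (hWD e.2)
    (ih _ (by omega) m₀ (hm.mono hsupp) rfl) he rfl he₀ ?_ ?_
  · intro p hp hpe hmp hpb
    exact hpe (hm p hp e he hpb (hsupp p hmp) (by omega))
  · intro p hp hpb hmp
    have hlt : e.2 < p.2 := hpb ▸ mem_pairs.1 hp
    refine ih _ ?_ _ (hm.mono fun q hq => ?_) rfl
    · rw [weight_add_single _ _ hp]
      have := e.2.isLt
      omega
    · by_cases hqp : q = p
      · exact hqp ▸ hsupp p hmp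
      · exact hsupp q (by simpa [hqp] using hq)

theorem invMonomial_partial_fraction (hz : Injective z) {a b j : Fin n} (hab : a < b)
    (hbj : b < j) (m : Fin n × Fin n → ℕ) :
    invMonomial z (m + Pi.single (a, j) 1 + Pi.single (b, j) 1) =
      invMonomial z (m + Pi.single (a, b) 1 + Pi.single (b, j) 1) -
        invMonomial z (m + Pi.single (a, b) 1 + Pi.single (a, j) 1) := by
  have hu : ∀ {i k : Fin n}, i < k → z i - z k ≠ 0 := fun h => sub_ne_zero.2 (hz.ne h.ne)
  simp only [invMonomial_add_single _ (mk_mem_pairs hab),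
    invMonomial_add_single _ (mk_mem_pairs hbj),
    invMonomial_add_single _ (mk_mem_pairs (hab.trans hbj))]
  field_simp [hu hab, hu hbj, hu (hab.trans hbj)]
  ring

theorem invMonomial_mem [CharZero F] (hz : Injective z) {W : Submodule F K}
    (hWz : ∀ i, ∀ x ∈ W, z i * x ∈ W) (D : Fin n → Derivation F K K)
    (hD : ∀ i j, D i (z j) = if i = j then 1 else 0) (hWD : ∀ i, ∀ x ∈ W, D i x ∈ W)
    (hf : invMonomial z 1 ∈ W) (m : Fin n × Fin n → ℕ) : invMonomial z m ∈ W := by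
  induction hN : weight (fun p => p.2) m using Nat.strong_induction_on generalizing m with
  | _ N ih =>
  by_cases hm : IsForest m
  · exact invMonomial_mem_of_isForest hz hWz D hD hWD hf m hm
  obtain ⟨⟨a, j⟩, hp, ⟨b, j'⟩, hq, rfl, hmp, hmq, hpq⟩ :
      ∃ p ∈ pairs n, ∃ q ∈ pairs n, p.2 = q.2 ∧ m p ≠ 0 ∧ m q ≠ 0 ∧ p ≠ q := by
    simpa [IsForest] using hm
  wlog hab : a < b generalizing a b
  · exact this b hq a hp hmq hmp hpq.symm
      (lt_of_le_of_ne (not_lt.1 hab) fun h => hpq (by rw [h]))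
  set m₀ := m - Pi.single (a, j) 1 - Pi.single (b, j) 1
  have hm₀ : m₀ + Pi.single (a, j) 1 + Pi.single (b, j) 1 = m := by
    rw [add_right_comm, sub_single_add_single (by simpa [Pi.single_apply, hpq.symm] using hmq),
      sub_single_add_single hmp]
  have hbj : b < j := mem_pairs.1 hq
  have hab' := mk_mem_pairs hab
  rw [← hm₀, invMonomial_partial_fraction hz hab hbj]
  refine W.sub_mem (ih _ ?_ _ rfl) (ih _ ?_ _ rfl) <;>
    simp only [← hN, ← hm₀, weight_add_single _ _ hp, weight_add_single _ _ hq,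
      weight_add_single _ _ hab'] <;> omega

end DiagonalLocalization

open DiagonalLocalization in
theorem diag_product_is_cyclic_vector_general
    (F K : Type*) [Field F] [CharZero F] [Field K] [Algebra F K]
    (n : ℕ) (z : Fin n → K)
    (hz : AlgebraicIndependent F z)
    (D : Fin n → (K →ₗ[F] K))
    (hLeib : ∀ (i : Fin n) (x y : K), D i (x * y) = x * D i y + D i x * y)
    (hDz : ∀ i j : Fin n, D i (z j) = if i = j then 1 else 0) :
    sInf {W : Submodule F K |
        (∏ p ∈ Finset.univ.filter (fun p : Fin n × Fin n => p.1 < p.2),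
          (z p.1 - z p.2)⁻¹) ∈ W ∧
        (∀ i : Fin n, ∀ x ∈ W, z i * x ∈ W) ∧
        (∀ i : Fin n, ∀ x ∈ W, D i x ∈ W)} =
      Subalgebra.toSubmodule (Algebra.adjoin F
        (Set.range z ∪ {x : K | ∃ i j : Fin n, i < j ∧ x = (z i - z j)⁻¹})) := by
  let δ i : Derivation F K K :=
    .mk' (D i) fun x y => by rw [hLeib, smul_eq_mul, smul_eq_mul, mul_comm (D i x)]
  have hf : ∏ p ∈ pairs n, (z p.1 - z p.2)⁻¹ = invMonomial z 1 := by simp [invMonomial]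
  refine le_antisymm (sInf_le ⟨?_, ?_, ?_⟩) (le_sInf ?_)
  · exact (Subalgebra.mem_toSubmodule _).2 <|
      prod_mem fun p hp => Algebra.subset_adjoin (Or.inr ⟨p.1, p.2, mem_pairs.1 hp, rfl⟩)
  · exact fun i x hx => (Subalgebra.mem_toSubmodule _).2 <|
      mul_mem (Algebra.subset_adjoin (Or.inl (Set.mem_range_self i))) hx
  · refine fun i x hx => derivation_mem_diagLocalization (δ i) (fun j => ?_) hx
    change D i (z j) ∈ diagLocalization F z
    rw [hDz]
    split_ifs <;> simp
  · rintro W ⟨hfW, hWz, hWD⟩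
    exact diagLocalization_le_of_invMonomial_mem hWz
      (invMonomial_mem hz.injective hWz δ hDz hWD (hf ▸ hfW))

/-- **Lemma 5.1 of Bakalov–De Sole–Heluani–Kac (due to P. Etingof)**: let `F` be a field
of characteristic `0` and let `K = F(z_1,…,z_n)` be the field of rational functions in
`n ≥ 1` variables, formalized as a field extension `K` of `F` together with an
algebraically independent family `z : Fin n → K` generating `K` as a field over `F`.
Let `D i` be the partial derivative `∂_{z_i}`, i.e. the `F`-linear derivation of `K`
with `D i (z j) = δ_{ij}`. Then the function `f = ∏_{i<j} (z_i - z_j)⁻¹` is a cyclic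
vector of the module of rational functions regular away from the diagonals: the smallest
`F`-linear subspace of `K` containing `f` and stable under multiplication by each `z_i`
and under each `∂_{z_i}` equals
`O*_n = F[z_1,…,z_n][(z_i - z_j)⁻¹ : i < j]`. -/
theorem diag_product_is_cyclic_vector
    (F K : Type*) [Field F] [CharZero F] [Field K] [Algebra F K]
    (n : ℕ) (hn : 1 ≤ n) (z : Fin n → K)
    (hz : AlgebraicIndependent F z)
    (hgen : IntermediateField.adjoin F (Set.range z) = ⊤)
    (D : Fin n → (K →ₗ[F] K))
    (hLeib : ∀ (i : Fin n) (x y : K), D i (x * y) = x * D i y + D i x * y)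
    (hDz : ∀ i j : Fin n, D i (z j) = if i = j then 1 else 0) :
    sInf {W : Submodule F K |
        (∏ p ∈ Finset.univ.filter (fun p : Fin n × Fin n => p.1 < p.2),
          (z p.1 - z p.2)⁻¹) ∈ W ∧
        (∀ i : Fin n, ∀ x ∈ W, z i * x ∈ W) ∧
        (∀ i : Fin n, ∀ x ∈ W, D i x ∈ W)} =
      Subalgebra.toSubmodule (Algebra.adjoin F
        (Set.range z ∪ {x : K | ∃ i j : Fin n, i < j ∧ x = (z i - z j)⁻¹})) :=
  diag_product_is_cyclic_vector_general F K n z hz D hLeib hDz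
end

section
/- Cycle relation for the pole filtration: let F be a field of characteristic 0 and n ≥ 1. For every s ≥ 2 and every cyclic sequence i_1, i_2, …, i_s, i_{s+1} = i_1 of elements of {1,…,n} with i_t ≠ i_{t+1} for all t, the rational function ∏_{t=1}^{s} (z_{i_t} − z_{i_{t+1}})^{−1} lies in fil^{s−1}. Consequently, if a finite multiset E of oriented edges on {1,…,n} has r elements and contains an oriented cycle, then ∏_{(i,j) ∈ E} (z_i − z_j)^{−1} ∈ fil^{r−1}. -/
/-- The pole filtration of the algebra of rational functions regular away from the
diagonals: `fil F K z r` is the `F`-linear span of all elements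
`g · (z_{i_1} - z_{j_1})^{-m_1} ⋯ (z_{i_s} - z_{j_s})^{-m_s}` with `s ≤ r` divisors,
distinct underlying unordered pairs `{i_t, j_t}`, exponents `m_t ≥ 1`, and `g` a
polynomial in the differences `z_i - z_j`. -/
noncomputable def fil (F : Type*) {K : Type*} [Field F] [Field K] [Algebra F K]
    {n : ℕ} (z : Fin n → K) (r : ℕ) : Submodule F K :=
  Submodule.span F {x : K | ∃ s : ℕ, s ≤ r ∧
    ∃ (i j : Fin s → Fin n) (m : Fin s → ℕ) (g : K),
      (∀ t, i t ≠ j t) ∧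
      (∀ t t' : Fin s, t ≠ t' → ({i t, j t} : Finset (Fin n)) ≠ {i t', j t'}) ∧
      (∀ t, 1 ≤ m t) ∧
      g ∈ Algebra.adjoin F {y : K | ∃ a b : Fin n, y = z a - z b} ∧
      x = g * ∏ t, ((z (i t) - z (j t))⁻¹) ^ m t}

/-!
The partial fraction identity `1/((a-b)(b-c)) = 1/(a-c) · (1/(a-b) + 1/(b-c))`, applied to
the first two edges `c 0 → c 1 → c 2` of a cycle, writes the cycle product as a sum of two
terms, each a shorter cycle (with the edge `c 0 → c 2` replacing that path) times one
extra factor. If `c 0 = c 2` the identity is unavailable, but then the cycle splits into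
the 2-cycle `c 0 → c 1 → c 0` and a shorter one. Since a single factor `(z_a - z_b)⁻¹`
raises the filtration degree by at most one, induction on the length gives `fil^{s-1}`,
and the remaining edges of `E` cost one degree each.
-/

section

variable {F K : Type*} [Field F] [Field K] [Algebra F K] {n : ℕ} {z : Fin n → K}

variable (F z) in
def filGenerators (r : ℕ) : Set K :=
  {x : K | ∃ s : ℕ, s ≤ r ∧
    ∃ (i j : Fin s → Fin n) (m : Fin s → ℕ) (g : K),
      (∀ t, i t ≠ j t) ∧
      (∀ t t' : Fin s, t ≠ t' → ({i t, j t} : Finset (Fin n)) ≠ {i t', j t'}) ∧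
      (∀ t, 1 ≤ m t) ∧
      g ∈ Algebra.adjoin F {y : K | ∃ a b : Fin n, y = z a - z b} ∧
      x = g * ∏ t, ((z (i t) - z (j t))⁻¹) ^ m t}

theorem inv_sub_eq_or_eq_neg_of_pair_eq {a b i j : Fin n}
    (h : ({i, j} : Finset (Fin n)) = {a, b}) :
    (z a - z b)⁻¹ = (z i - z j)⁻¹ ∨ (z a - z b)⁻¹ = -(z i - z j)⁻¹ := by
  rw [← Finset.coe_inj, Finset.coe_pair, Finset.coe_pair, Set.pair_eq_pair_iff] at h
  rcases h with ⟨rfl, rfl⟩ | ⟨rfl, rfl⟩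
  · exact Or.inl rfl
  · exact Or.inr (by rw [← inv_neg, neg_sub])

theorem prod_pow_add_ite_eq {s : ℕ} (x : Fin s → K) (m : Fin s → ℕ) (t₀ : Fin s) :
    ∏ t, x t ^ (m t + if t = t₀ then 1 else 0) = (∏ t, x t ^ m t) * x t₀ := by
  simp only [pow_add, Finset.prod_mul_distrib, pow_ite, pow_one, pow_zero,
    Finset.prod_ite_eq', Finset.mem_univ, if_true]

theorem mul_inv_sub_mem_filGenerators {r : ℕ} {x : K} (hx : x ∈ filGenerators F z r) {a b : Fin n}
    (hab : a ≠ b) : x * (z a - z b)⁻¹ ∈ filGenerators F z (r + 1) := by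
  obtain ⟨s, hs, i, j, m, g, hij, hdist, hm, hg, rfl⟩ := hx
  by_cases hold : ∃ t₀, ({i t₀, j t₀} : Finset (Fin n)) = {a, b}
  · obtain ⟨t₀, ht₀⟩ := hold
    have bump : ∀ g' ∈ Algebra.adjoin F {y : K | ∃ a b : Fin n, y = z a - z b},
        g' * (∏ t, (z (i t) - z (j t))⁻¹ ^ m t) * (z (i t₀) - z (j t₀))⁻¹
          ∈ filGenerators F z (r + 1) := fun g' hg' =>
      ⟨s, hs.trans r.le_succ, i, j, fun t => m t + if t = t₀ then 1 else 0, g', hij, hdist,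
        fun t => (hm t).trans (Nat.le_add_right _ _), hg', by
          rw [prod_pow_add_ite_eq, mul_assoc]⟩
    rcases inv_sub_eq_or_eq_neg_of_pair_eq (z := z) ht₀ with h | h <;> rw [h]
    · exact bump g hg
    · simpa only [neg_mul, mul_neg] using bump (-g) (neg_mem hg)
  · push Not at hold
    refine ⟨s + 1, Nat.succ_le_succ hs, Fin.snoc i a, Fin.snoc j b, Fin.snoc m 1, g,
      ?_, ?_, ?_, hg, ?_⟩
    · simpa [Fin.forall_fin_succ'] using ⟨hij, hab⟩
    · simp only [Fin.forall_fin_succ', Fin.snoc_castSucc, Fin.snoc_last, ne_eq,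
        Fin.castSucc_inj, Fin.castSucc_ne_last, (Fin.castSucc_ne_last _).symm, not_false_eq_true,
        forall_const, not_true_eq_false, imp_self, and_true]
      exact ⟨fun t => ⟨hdist t, hold t⟩, fun t h => hold t h.symm⟩
    · simpa [Fin.forall_fin_succ'] using hm
    · rw [Fin.prod_univ_castSucc]
      simp only [Fin.snoc_castSucc, Fin.snoc_last, pow_one, mul_assoc]

theorem mul_inv_sub_mem_fil {r : ℕ} {x : K} (hx : x ∈ fil F z r) {a b : Fin n} (hab : a ≠ b) :
    x * (z a - z b)⁻¹ ∈ fil F z (r + 1) := by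
  have : fil F z r ≤ (fil F z (r + 1)).comap (LinearMap.mulRight F (z a - z b)⁻¹) :=
    Submodule.span_le.mpr fun y hy => Submodule.subset_span (mul_inv_sub_mem_filGenerators hy hab)
  exact this hx

theorem mul_prod_inv_sub_mem_fil {r : ℕ} {x : K} (hx : x ∈ fil F z r)
    (D : Multiset (Fin n × Fin n)) (hD : ∀ e ∈ D, e.1 ≠ e.2) :
    x * (D.map fun e => (z e.1 - z e.2)⁻¹).prod ∈ fil F z (r + Multiset.card D) := by
  induction D using Multiset.induction with
  | empty => simpa using hx
  | cons e D ih =>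
    have hD' := Multiset.forall_mem_cons.mp hD
    rw [Multiset.map_cons, Multiset.prod_cons, Multiset.card_cons, mul_left_comm,
      ← add_assoc, mul_comm]
    exact mul_inv_sub_mem_fil (ih hD'.2) hD'.1

theorem neg_inv_sub_sq_mem_fil {a b : Fin n} (hab : a ≠ b) :
    -((z a - z b)⁻¹ ^ 2) ∈ fil F z 1 :=
  Submodule.subset_span ⟨1, le_rfl, fun _ => a, fun _ => b, fun _ => 2, -1, fun _ => hab,
    fun t t' h => absurd (Subsingleton.elim t t') h, fun _ => one_le_two,
    neg_mem (one_mem _), by simp⟩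

theorem inv_sub_mul_inv_sub {a b c : K} (hab : a ≠ b) (hbc : b ≠ c) (hac : a ≠ c) :
    (a - b)⁻¹ * (b - c)⁻¹ = (a - c)⁻¹ * ((a - b)⁻¹ + (b - c)⁻¹) := by
  have := sub_ne_zero.mpr hab
  have := sub_ne_zero.mpr hbc
  have := sub_ne_zero.mpr hac
  field_simp
  ring

def IsClosedWalk {α : Type*} (c : ℕ → α) (s : ℕ) : Prop :=
  c s = c 0 ∧ ∀ t < s, c t ≠ c (t + 1)

namespace IsClosedWalk

variable {α : Type*} {c : ℕ → α} {s : ℕ}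

theorem shift_two (hc : IsClosedWalk c (s + 2)) (h02 : c 0 = c 2) :
    IsClosedWalk (fun t => c (t + 2)) s :=
  ⟨hc.1.trans h02, fun t ht => hc.2 (t + 2) (by omega)⟩

theorem skip_one (hc : IsClosedWalk c (s + 2)) (h02 : c 0 ≠ c 2) :
    IsClosedWalk (fun t => c (if t = 0 then 0 else t + 1)) (s + 1) := by
  refine ⟨by simpa using hc.1, fun t ht => ?_⟩
  rcases t with _ | t
  · simpa using h02
  · simpa using hc.2 (t + 2) (by omega)

end IsClosedWalk

variable (z) in
def cycleProd (c : ℕ → Fin n) (s : ℕ) : K :=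
  ∏ t ∈ Finset.range s, (z (c t) - z (c (t + 1)))⁻¹

theorem cycleProd_add_two (c : ℕ → Fin n) (s : ℕ) :
    cycleProd z c (s + 2) =
      (z (c 0) - z (c 1))⁻¹ * (z (c 1) - z (c 2))⁻¹ * cycleProd z (fun t => c (t + 2)) s := by
  simp only [cycleProd, Finset.prod_range_succ' _ (s + 1), Finset.prod_range_succ' _ s]
  ring

theorem cycleProd_skip_one (c : ℕ → Fin n) (s : ℕ) :
    cycleProd z (fun t => c (if t = 0 then 0 else t + 1)) (s + 1) =
      (z (c 0) - z (c 2))⁻¹ * cycleProd z (fun t => c (t + 2)) s := by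
  simp only [cycleProd, Finset.prod_range_succ' _ s]
  simp [mul_comm]

theorem cycleProd_mem_fil (hz : Function.Injective z) (s : ℕ) {c : ℕ → Fin n}
    (hc : IsClosedWalk c (s + 2)) : cycleProd z c (s + 2) ∈ fil F z (s + 1) := by
  induction s using Nat.strong_induction_on generalizing c with
  | _ s ih =>
    have h01 : c 0 ≠ c 1 := hc.2 0 (by omega)
    have h12 : c 1 ≠ c 2 := hc.2 1 (by omega)
    rw [cycleProd_add_two]
    rcases s with _ | s
    · have hc2 : c 2 = c 0 := hc.1
      convert neg_inv_sub_sq_mem_fil (F := F) h01 using 1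
      rw [hc2, cycleProd, Finset.prod_range_zero, ← neg_sub (z (c 0)), inv_neg]
      ring
    by_cases h02 : c 0 = c 2
    · obtain ⟨k, rfl⟩ : ∃ k, s = k + 1 := by
        refine Nat.exists_eq_add_one.mpr (Nat.pos_of_ne_zero fun hs => ?_)
        subst hs
        exact hc.2 2 (by omega) (h02.symm.trans hc.1.symm)
      have htail := ih k (by omega) (hc.shift_two h02)
      rw [mul_comm, ← mul_assoc]
      exact mul_inv_sub_mem_fil (mul_inv_sub_mem_fil htail h01) h12
    · have hmerged := ih s (by omega) (hc.skip_one h02)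
      rw [cycleProd_skip_one] at hmerged
      rw [inv_sub_mul_inv_sub (hz.ne h01) (hz.ne h12) (hz.ne h02), mul_right_comm, mul_add]
      exact add_mem (mul_inv_sub_mem_fil hmerged h01) (mul_inv_sub_mem_fil hmerged h12)

theorem prod_map_inv_sub_mem_fil_of_closedWalk_le (hz : Function.Injective z)
    {E : Multiset (Fin n × Fin n)} (hE : ∀ e ∈ E, e.1 ≠ e.2) {s : ℕ} {c : ℕ → Fin n}
    (hc : IsClosedWalk c (s + 2))
    (hle : ((Finset.range (s + 2)).val.map fun t => (c t, c (t + 1))) ≤ E) :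
    (E.map fun e => (z e.1 - z e.2)⁻¹).prod ∈ fil F z (Multiset.card E - 1) := by
  obtain ⟨D, rfl⟩ := Multiset.le_iff_exists_add.mp hle
  have hD : ∀ e ∈ D, e.1 ≠ e.2 := fun e he => hE e (Multiset.mem_add.mpr (Or.inr he))
  rw [Multiset.map_add, Multiset.prod_add, Multiset.map_map, Multiset.card_add,
    Multiset.card_map, Finset.card_val, Finset.card_range,
    show s + 2 + Multiset.card D - 1 = s + 1 + Multiset.card D by omega]
  exact mul_prod_inv_sub_mem_fil (cycleProd_mem_fil hz s hc) D hD

end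

theorem cycle_relation_fil_general
    (F K : Type*) [Field F] [Field K] [Algebra F K]
    (n : ℕ) (z : Fin n → K)
    (hz : AlgebraicIndependent F z) :
    (∀ s : ℕ, 2 ≤ s → ∀ c : ℕ → Fin n, c s = c 0 → (∀ t < s, c t ≠ c (t + 1)) →
      (∏ t ∈ Finset.range s, (z (c t) - z (c (t + 1)))⁻¹) ∈ fil F z (s - 1)) ∧
    (∀ E : Multiset (Fin n × Fin n), (∀ e ∈ E, e.1 ≠ e.2) →
      (∃ s : ℕ, 2 ≤ s ∧ ∃ c : ℕ → Fin n, c s = c 0 ∧ (∀ t < s, c t ≠ c (t + 1)) ∧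
        ((Finset.range s).val.map fun t => (c t, c (t + 1))) ≤ E) →
      (E.map fun e => (z e.1 - z e.2)⁻¹).prod ∈ fil F z (Multiset.card E - 1)) := by
  refine ⟨fun s hs c hcs hadj => ?_, fun E hE ⟨s, hs, c, hcs, hadj, hle⟩ => ?_⟩
  · obtain ⟨s, rfl⟩ := Nat.exists_eq_add_of_le' hs
    exact cycleProd_mem_fil hz.injective s ⟨hcs, hadj⟩
  · obtain ⟨s, rfl⟩ := Nat.exists_eq_add_of_le' hs
    exact prod_map_inv_sub_mem_fil_of_closedWalk_le hz.injective hE ⟨hcs, hadj⟩ hle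

/-- **Cycle relation for the pole filtration** (from the proof of Lemma 7.4 of
Bakalov–De Sole–Heluani–Kac): let `F` be a field of characteristic `0` and
`K = F(z_1,…,z_n)` the rational function field in `n ≥ 1` variables (formalized as a
field extension generated by an algebraically independent family `z`). First, for every
`s ≥ 2` and every cyclic sequence `c 0, c 1, …, c (s-1), c s = c 0` of indices with
consecutive entries distinct, the function `∏_{t=0}^{s-1} (z_{c t} - z_{c (t+1)})⁻¹`
lies in `fil^{s-1}`. Consequently, if a finite multiset `E` of oriented edges (ordered
pairs of distinct indices) has `r` elements and contains an oriented cycle, then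
`∏_{(i,j) ∈ E} (z_i - z_j)⁻¹ ∈ fil^{r-1}`. -/
theorem cycle_relation_fil
    (F K : Type*) [Field F] [CharZero F] [Field K] [Algebra F K]
    (n : ℕ) (hn : 1 ≤ n) (z : Fin n → K)
    (hz : AlgebraicIndependent F z)
    (hgen : IntermediateField.adjoin F (Set.range z) = ⊤) :
    (∀ s : ℕ, 2 ≤ s → ∀ c : ℕ → Fin n, c s = c 0 → (∀ t < s, c t ≠ c (t + 1)) →
      (∏ t ∈ Finset.range s, (z (c t) - z (c (t + 1)))⁻¹) ∈ fil F z (s - 1)) ∧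
    (∀ E : Multiset (Fin n × Fin n), (∀ e ∈ E, e.1 ≠ e.2) →
      (∃ s : ℕ, 2 ≤ s ∧ ∃ c : ℕ → Fin n, c s = c 0 ∧ (∀ t < s, c t ≠ c (t + 1)) ∧
        ((Finset.range s).val.map fun t => (c t, c (t + 1))) ≤ E) →
      (E.map fun e => (z e.1 - z e.2)⁻¹).prod ∈ fil F z (Multiset.card E - 1)) :=
  cycle_relation_fil_general F K n z hz
end

section
/- Coassociativity of the cocomposition of graphs: let n ≥ 1, let m_1,…,m_n ≥ 1 with M_i = m_1+⋯+m_i, let ℓ_1,…,ℓ_{M_n} ≥ 1 with L_j = ℓ_1+⋯+ℓ_j, and set K_i = ℓ_{M_{i−1}+1}+⋯+ℓ_{M_i} for i = 1,…,n. Then for every L_{M_n}-graph Γ: (i) Δ_0^{m_1…m_n}(Δ_0^{ℓ_1…ℓ_{M_n}}(Γ)) = Δ_0^{K_1…K_n}(Γ) as n-graphs; (ii) for every 1 ≤ i ≤ n, Δ_i^{m_1…m_n}(Δ_0^{ℓ_1…ℓ_{M_n}}(Γ)) = Δ_0^{ℓ_{M_{i−1}+1}…ℓ_{M_i}}(Δ_i^{K_1…K_n}(Γ))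 as m_i-graphs; (iii) for every 1 ≤ i ≤ n and 1 ≤ j ≤ m_i, Δ_{M_{i−1}+j}^{ℓ_1…ℓ_{M_n}}(Γ) = Δ_j^{ℓ_{M_{i−1}+1}…ℓ_{M_i}}(Δ_i^{K_1…K_n}(Γ)) as ℓ_{M_{i−1}+j}-graphs. -/
/-! The vertex at position `k` of the `j`-th sub-block of the `i`-th block sits at
`K_1 + ⋯ + K_{i-1} + ℓ_{M_{i-1}+1} + ⋯ + ℓ_{M_{i-1}+j-1} + k`, whether one groups first by
`ℓ` and then by `m`, or first by `K` and then by `ℓ_{M_{i-1}+1}, …, ℓ_{M_i}`: both groupings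
are lexicographic. Each cocomposition keeps or drops every edge and relabels it according to
the blocks of its two endpoints, so all three identities reduce to comparing these edge rules
on the addresses `(i, j, k)`. -/

open Equiv

/-- The `0`-th cocomposition `Δ_0^{m_1…m_n}(Γ)` of an `M`-graph `Γ` (a multiset of
oriented edges on `Fin M`, `M = ∑ m i`): the `n`-graph obtained by collapsing each of the
blocks of sizes `m_1,…,m_n` to a single vertex, keeping (with multiplicity) the edges
joining two different blocks. -/
def graphDelta0 {n : ℕ} (m : Fin n → ℕ)
    (Γ : Multiset (Fin (∑ i, m i) × Fin (∑ i, m i))) : Multiset (Fin n × Fin n) :=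
  Γ.filterMap fun e =>
    if ((finSigmaEquiv n m).symm e.1).1 = ((finSigmaEquiv n m).symm e.2).1 then none
    else some (((finSigmaEquiv n m).symm e.1).1, ((finSigmaEquiv n m).symm e.2).1)

/-- The `i`-th cocomposition `Δ_i^{m_1…m_n}(Γ)` of an `M`-graph `Γ`: the `m_i`-graph of
edges of `Γ` lying inside the `i`-th block, relabelled by the positions within the
block. -/
def graphDeltaI {n : ℕ} (m : Fin n → ℕ) (i : Fin n)
    (Γ : Multiset (Fin (∑ i, m i) × Fin (∑ i, m i))) : Multiset (Fin (m i) × Fin (m i)) :=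
  Γ.filterMap fun e =>
    if h : ((finSigmaEquiv n m).symm e.1).1 = i ∧ ((finSigmaEquiv n m).symm e.2).1 = i then
      some (Fin.cast (congrArg m h.1) ((finSigmaEquiv n m).symm e.1).2,
        Fin.cast (congrArg m h.2) ((finSigmaEquiv n m).symm e.2).2)
    else none

lemma sum_blocks {n : ℕ} (m : Fin n → ℕ) (ℓ : Fin (∑ i, m i) → ℕ) :
    (∑ j, ℓ j) = ∑ i, ∑ j : Fin (m i), ℓ (finSigmaEquiv n m ⟨i, j⟩) := by
  rw [← Equiv.sum_comp (finSigmaEquiv n m) ℓ, ← Finset.univ_sigma_univ, Finset.sum_sigma]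

def blockOffset {n : ℕ} (m : Fin n → ℕ) (i : Fin n) : ℕ :=
  ∑ k with k < i, m k

lemma blockOffset_succ {n : ℕ} (m : Fin (n + 1) → ℕ) (i : Fin n) :
    blockOffset m i.succ = m 0 + blockOffset (fun k => m k.succ) i := by
  simp [blockOffset, Finset.sum_filter, Fin.sum_univ_succ, Fin.succ_lt_succ_iff]

lemma finSigmaEquiv_val : ∀ {n : ℕ} (m : Fin n → ℕ) (i : Fin n) (j : Fin (m i)),
    (finSigmaEquiv n m ⟨i, j⟩ : ℕ) = blockOffset m i + j
  | 0, _, i, _ => i.elim0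
  | n + 1, m, i, j => by
    induction i using Fin.cases with
    | zero => simp [finSigmaEquiv, sigmaFinSucc, blockOffset]
    | succ i =>
      simp [finSigmaEquiv, sigmaFinSucc, blockOffset_succ,
        finSigmaEquiv_val (fun k => m k.succ) i j, add_assoc]

section Offsets

variable {n : ℕ} (m : Fin n → ℕ)

lemma blockOffset_add_le {i i' : Fin n} (h : i < i') :
    blockOffset m i + m i ≤ blockOffset m i' := by
  unfold blockOffset
  rw [add_comm, ← Finset.sum_insert (s := {k | k < i}) (by simp)]
  exact Finset.sum_le_sum_of_subset (by intro k; simp; omega)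

lemma finSigmaEquiv_lt_iff {i i' : Fin n} (j : Fin (m i)) (j' : Fin (m i')) :
    finSigmaEquiv n m ⟨i, j⟩ < finSigmaEquiv n m ⟨i', j'⟩ ↔
      i < i' ∨ i = i' ∧ (j : ℕ) < j' := by
  rw [Fin.lt_def, finSigmaEquiv_val, finSigmaEquiv_val]
  rcases lt_trichotomy i i' with h | rfl | h
  · have := blockOffset_add_le m h
    simp only [h, true_or, iff_true]
    omega
  · simp
  · have := blockOffset_add_le m h
    simp only [h.not_gt, h.ne', false_and, or_self, iff_false, not_lt]
    omega

variable (ℓ : Fin (∑ i, m i) → ℕ)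

lemma blockOffset_finSigmaEquiv (i : Fin n) (j : Fin (m i)) :
    blockOffset ℓ (finSigmaEquiv n m ⟨i, j⟩) =
      blockOffset (fun i => ∑ j : Fin (m i), ℓ (finSigmaEquiv n m ⟨i, j⟩)) i +
        blockOffset (fun j => ℓ (finSigmaEquiv n m ⟨i, j⟩)) j := by
  have split : ∀ (i' : Fin n) (j' : Fin (m i')),
      (if finSigmaEquiv n m ⟨i', j'⟩ < finSigmaEquiv n m ⟨i, j⟩
        then ℓ (finSigmaEquiv n m ⟨i', j'⟩) else 0) =
      (if i' < i then ℓ (finSigmaEquiv n m ⟨i', j'⟩) else 0) +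
        if i' = i then (if (j' : ℕ) < j then ℓ (finSigmaEquiv n m ⟨i', j'⟩) else 0) else 0 := by
    intro i' j'
    simp only [finSigmaEquiv_lt_iff]
    rcases lt_trichotomy i' i with h | rfl | h
    · simp [h, h.ne]
    · simp
    · simp [h.not_gt, h.ne']
  simp only [blockOffset, Finset.sum_filter]
  rw [← Equiv.sum_comp (finSigmaEquiv n m), ← Finset.univ_sigma_univ, Finset.sum_sigma]
  simp only [split, Finset.sum_add_distrib, Finset.sum_ite_irrel, Finset.sum_const_zero,
    Finset.sum_ite_eq', Finset.mem_univ, if_true]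
  simp only [Fin.lt_def]

lemma finSigmaEquiv_assoc (i : Fin n) (j : Fin (m i))
    (k : Fin (ℓ (finSigmaEquiv n m ⟨i, j⟩))) :
    Fin.cast (sum_blocks m ℓ) (finSigmaEquiv _ ℓ ⟨finSigmaEquiv n m ⟨i, j⟩, k⟩) =
      finSigmaEquiv n (fun i => ∑ j : Fin (m i), ℓ (finSigmaEquiv n m ⟨i, j⟩))
        ⟨i, finSigmaEquiv (m i) (fun j => ℓ (finSigmaEquiv n m ⟨i, j⟩)) ⟨j, k⟩⟩ := by
  ext
  simp only [Fin.val_cast, finSigmaEquiv_val, blockOffset_finSigmaEquiv, add_assoc]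

lemma exists_finSigmaEquiv_finSigmaEquiv_eq (v : Fin (∑ j, ℓ j)) :
    ∃ (i : Fin n) (j : Fin (m i)) (k : Fin (ℓ (finSigmaEquiv n m ⟨i, j⟩))),
      finSigmaEquiv _ ℓ ⟨finSigmaEquiv n m ⟨i, j⟩, k⟩ = v := by
  obtain ⟨⟨a, k⟩, rfl⟩ := (finSigmaEquiv _ ℓ).surjective v
  obtain ⟨⟨i, j⟩, rfl⟩ := (finSigmaEquiv n m).surjective a
  exact ⟨i, j, k, rfl⟩

end Offsets

section Edges

variable {n : ℕ} (m : Fin n → ℕ)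

/- The edge rules of `graphDelta0` and `graphDeltaI` as named functions: `simp` can rewrite
the argument of `graphDeltaIEdge m i`, but not the edge inside the unfolded rule, whose
dependent `if` mentions it. -/

def graphDelta0Edge (e : Fin (∑ i, m i) × Fin (∑ i, m i)) : Option (Fin n × Fin n) :=
  if ((finSigmaEquiv n m).symm e.1).1 = ((finSigmaEquiv n m).symm e.2).1 then none
  else some (((finSigmaEquiv n m).symm e.1).1, ((finSigmaEquiv n m).symm e.2).1)

def graphDeltaIEdge (i : Fin n) (e : Fin (∑ i, m i) × Fin (∑ i, m i)) :
    Option (Fin (m i) × Fin (m i)) :=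
  if h : ((finSigmaEquiv n m).symm e.1).1 = i ∧ ((finSigmaEquiv n m).symm e.2).1 = i then
    some (Fin.cast (congrArg m h.1) ((finSigmaEquiv n m).symm e.1).2,
      Fin.cast (congrArg m h.2) ((finSigmaEquiv n m).symm e.2).2)
  else none

lemma graphDelta0_eq_filterMap (Γ : Multiset (Fin (∑ i, m i) × Fin (∑ i, m i))) :
    graphDelta0 m Γ = Γ.filterMap (graphDelta0Edge m) :=
  rfl

lemma graphDeltaI_eq_filterMap (i : Fin n) (Γ : Multiset (Fin (∑ i, m i) × Fin (∑ i, m i))) :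
    graphDeltaI m i Γ = Γ.filterMap (graphDeltaIEdge m i) :=
  rfl

@[simp]
lemma graphDelta0Edge_finSigmaEquiv (x y : Σ i, Fin (m i)) :
    graphDelta0Edge m (finSigmaEquiv n m x, finSigmaEquiv n m y) =
      if x.1 = y.1 then none else some (x.1, y.1) := by
  simp only [graphDelta0Edge, Equiv.symm_apply_apply]

@[simp]
lemma graphDeltaIEdge_finSigmaEquiv (i : Fin n) (x y : Σ i, Fin (m i)) :
    graphDeltaIEdge m i (finSigmaEquiv n m x, finSigmaEquiv n m y) =
      if h : x.1 = i ∧ y.1 = i then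
        some (Fin.cast (congrArg m h.1) x.2, Fin.cast (congrArg m h.2) y.2)
      else none := by
  obtain ⟨x, rfl⟩ := (finSigmaEquiv n m).symm.surjective x
  obtain ⟨y, rfl⟩ := (finSigmaEquiv n m).symm.surjective y
  simp only [Equiv.apply_symm_apply]
  rfl

end Edges

section Coassociativity

variable {n : ℕ} (m : Fin n → ℕ) (ℓ : Fin (∑ i, m i) → ℕ)
  (Γ : Multiset (Fin (∑ j, ℓ j) × Fin (∑ j, ℓ j)))

theorem graphDelta0_graphDelta0 :
    graphDelta0 m (graphDelta0 ℓ Γ) =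
      graphDelta0 (fun i => ∑ j : Fin (m i), ℓ (finSigmaEquiv n m ⟨i, j⟩))
        (Γ.map fun e => (Fin.cast (sum_blocks m ℓ) e.1, Fin.cast (sum_blocks m ℓ) e.2)) := by
  simp only [graphDelta0_eq_filterMap, Multiset.filterMap_filterMap, Multiset.filterMap_map]
  refine congrArg (Multiset.filterMap · Γ) (funext fun ⟨v₁, v₂⟩ => ?_)
  obtain ⟨i₁, j₁, k₁, rfl⟩ := exists_finSigmaEquiv_finSigmaEquiv_eq m ℓ v₁
  obtain ⟨i₂, j₂, k₂, rfl⟩ := exists_finSigmaEquiv_finSigmaEquiv_eq m ℓ v₂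
  simp only [Function.comp_apply, finSigmaEquiv_assoc, graphDelta0Edge_finSigmaEquiv]
  split_ifs <;> simp_all

theorem graphDeltaI_graphDelta0 (i : Fin n) :
    graphDeltaI m i (graphDelta0 ℓ Γ) =
      graphDelta0 (fun j : Fin (m i) => ℓ (finSigmaEquiv n m ⟨i, j⟩))
        (graphDeltaI (fun i => ∑ j : Fin (m i), ℓ (finSigmaEquiv n m ⟨i, j⟩)) i
          (Γ.map fun e => (Fin.cast (sum_blocks m ℓ) e.1, Fin.cast (sum_blocks m ℓ) e.2))) := by
  simp only [graphDelta0_eq_filterMap, graphDeltaI_eq_filterMap, Multiset.filterMap_filterMap,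
    Multiset.filterMap_map]
  refine congrArg (Multiset.filterMap · Γ) (funext fun ⟨v₁, v₂⟩ => ?_)
  obtain ⟨i₁, j₁, k₁, rfl⟩ := exists_finSigmaEquiv_finSigmaEquiv_eq m ℓ v₁
  obtain ⟨i₂, j₂, k₂, rfl⟩ := exists_finSigmaEquiv_finSigmaEquiv_eq m ℓ v₂
  simp only [Function.comp_apply, finSigmaEquiv_assoc, graphDelta0Edge_finSigmaEquiv,
    graphDeltaIEdge_finSigmaEquiv]
  by_cases hi : i₁ = i ∧ i₂ = i
  · obtain ⟨rfl, rfl⟩ := hi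
    by_cases hj : j₁ = j₂
    · subst hj
      simp
    · simp [hj]
  · rw [dif_neg hi]
    split_ifs <;> simp [hi]

theorem graphDeltaI_finSigmaEquiv (i : Fin n) (j : Fin (m i)) :
    graphDeltaI ℓ (finSigmaEquiv n m ⟨i, j⟩) Γ =
      graphDeltaI (fun j' : Fin (m i) => ℓ (finSigmaEquiv n m ⟨i, j'⟩)) j
        (graphDeltaI (fun i => ∑ j : Fin (m i), ℓ (finSigmaEquiv n m ⟨i, j⟩)) i
          (Γ.map fun e => (Fin.cast (sum_blocks m ℓ) e.1, Fin.cast (sum_blocks m ℓ) e.2))) := by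
  simp only [graphDeltaI_eq_filterMap, Multiset.filterMap_filterMap, Multiset.filterMap_map]
  refine congrArg (Multiset.filterMap · Γ) (funext fun ⟨v₁, v₂⟩ => ?_)
  obtain ⟨i₁, j₁, k₁, rfl⟩ := exists_finSigmaEquiv_finSigmaEquiv_eq m ℓ v₁
  obtain ⟨i₂, j₂, k₂, rfl⟩ := exists_finSigmaEquiv_finSigmaEquiv_eq m ℓ v₂
  simp only [Function.comp_apply, finSigmaEquiv_assoc, graphDeltaIEdge_finSigmaEquiv]
  by_cases hi : i₁ = i ∧ i₂ = i
  · obtain ⟨rfl, rfl⟩ := hi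
    by_cases hj : j₁ = j ∧ j₂ = j
    · obtain ⟨rfl, rfl⟩ := hj
      simp
    · rw [dif_neg (by simpa using hj)]
      simp [hj]
  · rw [dif_neg (by simp only [EmbeddingLike.apply_eq_iff_eq, Sigma.mk.inj_iff]; tauto)]
    simp [hi]

end Coassociativity

theorem graph_cocomposition_coassoc_general
    (n : ℕ) (m : Fin n → ℕ)
    (ℓ : Fin (∑ i, m i) → ℕ)
    (Γ : Multiset (Fin (∑ j, ℓ j) × Fin (∑ j, ℓ j))) :
    (graphDelta0 m (graphDelta0 ℓ Γ) =
      graphDelta0 (fun i => ∑ j : Fin (m i), ℓ (finSigmaEquiv n m ⟨i, j⟩))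
        (Γ.map fun e =>
          (Fin.cast (sum_blocks m ℓ) e.1, Fin.cast (sum_blocks m ℓ) e.2))) ∧
    (∀ i : Fin n,
      graphDeltaI m i (graphDelta0 ℓ Γ) =
        graphDelta0 (fun j : Fin (m i) => ℓ (finSigmaEquiv n m ⟨i, j⟩))
          (graphDeltaI (fun i => ∑ j : Fin (m i), ℓ (finSigmaEquiv n m ⟨i, j⟩)) i
            (Γ.map fun e =>
              (Fin.cast (sum_blocks m ℓ) e.1, Fin.cast (sum_blocks m ℓ) e.2)))) ∧
    (∀ (i : Fin n) (j : Fin (m i)),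
      graphDeltaI ℓ (finSigmaEquiv n m ⟨i, j⟩) Γ =
        graphDeltaI (fun j' : Fin (m i) => ℓ (finSigmaEquiv n m ⟨i, j'⟩)) j
          (graphDeltaI (fun i => ∑ j : Fin (m i), ℓ (finSigmaEquiv n m ⟨i, j⟩)) i
            (Γ.map fun e =>
              (Fin.cast (sum_blocks m ℓ) e.1, Fin.cast (sum_blocks m ℓ) e.2)))) :=
  ⟨graphDelta0_graphDelta0 m ℓ Γ, graphDeltaI_graphDelta0 m ℓ Γ, graphDeltaI_finSigmaEquiv m ℓ Γ⟩

/-- **Coassociativity of the cocomposition of graphs** (Proposition 6.4 of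
Bakalov–De Sole–Heluani–Kac): given block sizes `m_1,…,m_n` and, for each vertex of
`Fin (∑ m i)`, further block sizes `ℓ`, set `K i = ∑_{j} ℓ` (the total size of the `i`-th
composite block). Then for every graph `Γ` on `Fin (∑ j, ℓ j)` (identified with
`Fin (∑ i, K i)` by the value-preserving cast):
(i)   `Δ_0^{m}(Δ_0^{ℓ}(Γ)) = Δ_0^{K}(Γ)`;
(ii)  `Δ_i^{m}(Δ_0^{ℓ}(Γ)) = Δ_0^{ℓ_i}(Δ_i^{K}(Γ))` for `1 ≤ i ≤ n`;
(iii) `Δ_{M_{i-1}+j}^{ℓ}(Γ) = Δ_j^{ℓ_i}(Δ_i^{K}(Γ))` for `1 ≤ i ≤ n`, `1 ≤ j ≤ m_i`,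
where `ℓ_i` is the restriction of `ℓ` to the `i`-th block. -/
theorem graph_cocomposition_coassoc
    (n : ℕ) (hn : 1 ≤ n) (m : Fin n → ℕ) (hm : ∀ i, 1 ≤ m i)
    (ℓ : Fin (∑ i, m i) → ℕ) (hℓ : ∀ j, 1 ≤ ℓ j)
    (Γ : Multiset (Fin (∑ j, ℓ j) × Fin (∑ j, ℓ j)))
    (hΓ : ∀ e ∈ Γ, e.1 ≠ e.2) :
    (graphDelta0 m (graphDelta0 ℓ Γ) =
      graphDelta0 (fun i => ∑ j : Fin (m i), ℓ (finSigmaEquiv n m ⟨i, j⟩))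
        (Γ.map fun e =>
          (Fin.cast (sum_blocks m ℓ) e.1, Fin.cast (sum_blocks m ℓ) e.2))) ∧
    (∀ i : Fin n,
      graphDeltaI m i (graphDelta0 ℓ Γ) =
        graphDelta0 (fun j : Fin (m i) => ℓ (finSigmaEquiv n m ⟨i, j⟩))
          (graphDeltaI (fun i => ∑ j : Fin (m i), ℓ (finSigmaEquiv n m ⟨i, j⟩)) i
            (Γ.map fun e =>
              (Fin.cast (sum_blocks m ℓ) e.1, Fin.cast (sum_blocks m ℓ) e.2)))) ∧
    (∀ (i : Fin n) (j : Fin (m i)),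
      graphDeltaI ℓ (finSigmaEquiv n m ⟨i, j⟩) Γ =
        graphDeltaI (fun j' : Fin (m i) => ℓ (finSigmaEquiv n m ⟨i, j'⟩)) j
          (graphDeltaI (fun i => ∑ j : Fin (m i), ℓ (finSigmaEquiv n m ⟨i, j⟩)) i
            (Γ.map fun e =>
              (Fin.cast (sum_blocks m ℓ) e.1, Fin.cast (sum_blocks m ℓ) e.2)))) :=
  graph_cocomposition_coassoc_general n m ℓ Γ
end

section
/- Coequivariance of the cocomposition of graphs: for every n ≥ 1, all positive integers m_1,…,m_n, all permutations σ ∈ S_n and τ_i ∈ S_{m_i} (i = 1,…,n), and every (m_1+⋯+m_n)-graph Γ, one has Δ_0^{m_{σ⁻¹(1)}…m_{σ⁻¹(n)}}((σ(τ_1,…,τ_n))(Γ)) = σ(Δ_0^{m_1…m_n}(Γ)) as n-graphs, and for every 1 ≤ i ≤ n, Δ_i^{m_{σ⁻¹(1)}…m_{σ⁻¹(n)}}((σ(τ_1,…,τ_n))(Γ)) = τ_{σ⁻¹(i)}(Δ_{σ⁻¹(i)}^{m_1…m_n}(Γ)) as m_{σ⁻¹(i)}-graphs. -/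
/-!
Read through the block decompositions `Fin (∑ i, m i) ≃ Σ i, Fin (m i)`, the composite
permutation `σ(τ_1,…,τ_n)` becomes `⟨i, j⟩ ↦ ⟨σ i, τ_i j⟩`: it moves the block of every vertex
by `σ` and permutes positions inside a block by `τ`. Both cocompositions only look at the block
and position of the two endpoints of each edge, one edge at a time, so it suffices to compare
the per-edge contributions: since `σ` is injective an edge joins two different blocks exactly
when its image does, and an edge inside block `σ⁻¹ i` goes to an edge inside block `i`
relabelled by `τ_{σ⁻¹ i}`.
-/

open Equiv

theorem Multiset.filterMap_map_eq_map_filterMap {α β γ δ : Type*} {s : Multiset α}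
    {g : α → β} {f : β → Option γ} {f' : α → Option δ} {h : δ → γ}
    (hfg : ∀ x, f (g x) = (f' x).map h) :
    (s.map g).filterMap f = (s.filterMap f').map h := by
  rw [Multiset.filterMap_map, Multiset.map_filterMap]
  exact congrArg (Multiset.filterMap · s) (funext hfg)

section Blocks

variable {ι ι' : Type*}

def blockRelabel (σ : ι ≃ ι') {m : ι → ℕ} (τ : ∀ i, Perm (Fin (m i))) :
    (Σ i, Fin (m i)) ≃ Σ k, Fin (m (σ.symm k)) :=
  Equiv.sigmaCongr σ fun i => (τ i).trans (finCongr (congrArg m (σ.symm_apply_apply i).symm))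

theorem blockRelabel_apply (σ : ι ≃ ι') {m : ι → ℕ} (τ : ∀ i, Perm (Fin (m i))) (i : ι)
    (j : Fin (m i)) :
    blockRelabel σ τ ⟨i, j⟩ = ⟨σ i, Fin.cast (congrArg m (σ.symm_apply_apply i).symm) (τ i j)⟩ :=
  rfl

variable [DecidableEq ι] [DecidableEq ι']

def collapseEdge {β : ι → Type*} (p q : Σ i, β i) : Option (ι × ι) :=
  if p.1 = q.1 then none else some (p.1, q.1)

theorem collapseEdge_eq_map_of_fst {β : ι → Type*} {β' : ι' → Type*} {f : ι → ι'}
    (hf : Function.Injective f) {p q : Σ i, β i} {p' q' : Σ i, β' i}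
    (hp : p'.1 = f p.1) (hq : q'.1 = f q.1) :
    collapseEdge p' q' = (collapseEdge p q).map (Prod.map f f) := by
  unfold collapseEdge
  simp only [hp, hq, hf.eq_iff]
  split_ifs <;> rfl

def blockCoord (m : ι → ℕ) (i : ι) (p : Σ j, Fin (m j)) : Option (Fin (m i)) :=
  if h : p.1 = i then some (Fin.cast (congrArg m h) p.2) else none

theorem blockCoord_blockRelabel (σ : ι ≃ ι') {m : ι → ℕ} (τ : ∀ i, Perm (Fin (m i))) (k : ι')
    (p : Σ i, Fin (m i)) :
    blockCoord (fun k => m (σ.symm k)) k (blockRelabel σ τ p) =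
      (blockCoord m (σ.symm k) p).map (τ (σ.symm k)) := by
  obtain ⟨i, j⟩ := p
  by_cases h : i = σ.symm k
  · subst h
    simp only [blockCoord, blockRelabel_apply, apply_symm_apply, ↓reduceDIte, Fin.cast_eq_self,
      Option.map_some]
    exact congrArg some (Fin.ext rfl)
  · have h' : σ i ≠ k := fun h' => h (σ.eq_symm_apply.mpr h')
    simp [blockCoord, blockRelabel_apply, h, h']

end Blocks

theorem graphDelta0_eq_filterMap_s19 {n : ℕ} (m : Fin n → ℕ)
    (Γ : Multiset (Fin (∑ i, m i) × Fin (∑ i, m i))) :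
    graphDelta0 m Γ = Γ.filterMap fun e =>
      collapseEdge ((finSigmaEquiv n m).symm e.1) ((finSigmaEquiv n m).symm e.2) :=
  rfl

theorem graphDeltaI_eq_filterMap_s19 {n : ℕ} (m : Fin n → ℕ) (i : Fin n)
    (Γ : Multiset (Fin (∑ i, m i) × Fin (∑ i, m i))) :
    graphDeltaI m i Γ = Γ.filterMap fun e => Option.map₂ Prod.mk
      (blockCoord m i ((finSigmaEquiv n m).symm e.1))
      (blockCoord m i ((finSigmaEquiv n m).symm e.2)) := by
  refine congrArg (Multiset.filterMap · Γ) (funext fun e => ?_)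
  by_cases h₁ : ((finSigmaEquiv n m).symm e.1).1 = i <;>
    by_cases h₂ : ((finSigmaEquiv n m).symm e.2).1 = i <;>
    simp [blockCoord, h₁, h₂]

theorem finSigmaEquiv_symm_cast_permCompose {n : ℕ} {m : Fin n → ℕ} (σ : Perm (Fin n))
    (τ : ∀ i, Perm (Fin (m i))) (x : Fin (∑ i, m i)) :
    (finSigmaEquiv n fun k => m (σ.symm k)).symm
        (Fin.cast (Equiv.sum_comp σ.symm m).symm (permCompose σ τ x)) =
      blockRelabel σ τ ((finSigmaEquiv n m).symm x) := by
  simp [permCompose, blockRelabel]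

theorem graph_cocomposition_coequivariance_general
    (n : ℕ) (m : Fin n → ℕ)
    (σ : Equiv.Perm (Fin n)) (τ : ∀ i, Equiv.Perm (Fin (m i)))
    (Γ : Multiset (Fin (∑ i, m i) × Fin (∑ i, m i))) :
    (graphDelta0 (fun i => m (σ.symm i))
        ((Γ.map fun e => (permCompose σ τ e.1, permCompose σ τ e.2)).map fun e =>
          (Fin.cast (Equiv.sum_comp σ.symm m).symm e.1,
            Fin.cast (Equiv.sum_comp σ.symm m).symm e.2)) =
      (graphDelta0 m Γ).map fun e => (σ e.1, σ e.2)) ∧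
    (∀ i : Fin n,
      graphDeltaI (fun k => m (σ.symm k)) i
          ((Γ.map fun e => (permCompose σ τ e.1, permCompose σ τ e.2)).map fun e =>
            (Fin.cast (Equiv.sum_comp σ.symm m).symm e.1,
              Fin.cast (Equiv.sum_comp σ.symm m).symm e.2)) =
        (graphDeltaI m (σ.symm i) Γ).map fun e =>
          (τ (σ.symm i) e.1, τ (σ.symm i) e.2)) := by
  refine ⟨?_, fun i => ?_⟩
  · rw [graphDelta0_eq_filterMap_s19, graphDelta0_eq_filterMap_s19, Multiset.map_map]
    refine Multiset.filterMap_map_eq_map_filterMap fun e => ?_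
    simp only [Function.comp_apply, finSigmaEquiv_symm_cast_permCompose]
    exact collapseEdge_eq_map_of_fst σ.injective rfl rfl
  · rw [graphDeltaI_eq_filterMap_s19, graphDeltaI_eq_filterMap_s19, Multiset.map_map]
    refine Multiset.filterMap_map_eq_map_filterMap fun e => ?_
    simp only [Function.comp_apply, finSigmaEquiv_symm_cast_permCompose,
      blockCoord_blockRelabel]
    simp only [Option.map₂_map_left, Option.map₂_map_right, Option.map_map₂]

/-- **Coequivariance of the cocomposition of graphs** (Proposition 6.5 of
Bakalov–De Sole–Heluani–Kac): for all permutations `σ ∈ S_n` and `τ_i ∈ S_{m_i}`, and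
every `(m_1 + ⋯ + m_n)`-graph `Γ`, one has
`Δ_0^{m_{σ⁻¹(1)}…m_{σ⁻¹(n)}}((σ(τ_1,…,τ_n))(Γ)) = σ(Δ_0^{m_1…m_n}(Γ))` and, for each
`i`, `Δ_i^{m_{σ⁻¹(1)}…m_{σ⁻¹(n)}}((σ(τ_1,…,τ_n))(Γ)) = τ_{σ⁻¹(i)}(Δ_{σ⁻¹(i)}^{m_1…m_n}(Γ))`,
where a permutation acts on a graph by relabelling the endpoints of all edges, and
`Fin (∑ i, m i)` is identified with `Fin (∑ i, m (σ⁻¹ i))` by the value-preserving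
cast. -/
theorem graph_cocomposition_coequivariance
    (n : ℕ) (hn : 1 ≤ n) (m : Fin n → ℕ) (hm : ∀ i, 1 ≤ m i)
    (σ : Equiv.Perm (Fin n)) (τ : ∀ i, Equiv.Perm (Fin (m i)))
    (Γ : Multiset (Fin (∑ i, m i) × Fin (∑ i, m i)))
    (hΓ : ∀ e ∈ Γ, e.1 ≠ e.2) :
    (graphDelta0 (fun i => m (σ.symm i))
        ((Γ.map fun e => (permCompose σ τ e.1, permCompose σ τ e.2)).map fun e =>
          (Fin.cast (Equiv.sum_comp σ.symm m).symm e.1,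
            Fin.cast (Equiv.sum_comp σ.symm m).symm e.2)) =
      (graphDelta0 m Γ).map fun e => (σ e.1, σ e.2)) ∧
    (∀ i : Fin n,
      graphDeltaI (fun k => m (σ.symm k)) i
          ((Γ.map fun e => (permCompose σ τ e.1, permCompose σ τ e.2)).map fun e =>
            (Fin.cast (Equiv.sum_comp σ.symm m).symm e.1,
              Fin.cast (Equiv.sum_comp σ.symm m).symm e.2)) =
        (graphDeltaI m (σ.symm i) Γ).map fun e =>
          (τ (σ.symm i) e.1, τ (σ.symm i) e.2)) :=
  graph_cocomposition_coequivariance_general n m σ τ Γ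
end
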